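/- arXiv:2407.10356 — 9 statements merged into one kernel-verified Lean document; each statement's English description precedes it below -/
import Mathlib

section
/- Let β be a real number and let u : ℝ³ → ℝ be a smooth function of (t,x,y) satisfying u_t + x·u_y = |x|^β·u_{xx} for all (t,x,y) with x ≠ 0. Define ũ(t̃,x̃,ỹ) via the transformation t̃ = y·sgn(x), x̃ = 1/x, ỹ = t·sgn(x), ũ = u/x. Then ũ satisfies ũ_{t̃} + x̃·ũ_{ỹ} = |x̃|^{5−β}·ũ_{x̃x̃} on its domain (x̃ ≠ 0). Equivalently: if u is a smooth solution of u_t + x u_y = |x|^β u_{xx} on the region x > 0, then the function v(t,x,y) := x·u(y, 1/x, t) is a solution of v_t + x v_y = |x|^{5−β} v_{xx} on x > 0. -/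
/-- Partial derivative in the first variable `t`. -/
noncomputable def Dt (u : ℝ → ℝ → ℝ → ℝ) : ℝ → ℝ → ℝ → ℝ :=
  fun t x y => deriv (fun s => u s x y) t

/-- Partial derivative in the second variable `x`. -/
noncomputable def Dx (u : ℝ → ℝ → ℝ → ℝ) : ℝ → ℝ → ℝ → ℝ :=
  fun t x y => deriv (fun s => u t s y) x

/-- Partial derivative in the third variable `y`. -/
noncomputable def Dy (u : ℝ → ℝ → ℝ → ℝ) : ℝ → ℝ → ℝ → ℝ :=
  fun t x y => deriv (fun s => u t x s) y

theorem stmt1 (β : ℝ) (u : ℝ → ℝ → ℝ → ℝ)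
    (hu : ContDiff ℝ (⊤ : ℕ∞) (fun p : ℝ × ℝ × ℝ => u p.1 p.2.1 p.2.2))
    (hpde : ∀ t x y : ℝ, 0 < x →
      Dt u t x y + x * Dy u t x y = x ^ β * Dx (Dx u) t x y) :
    ∀ t x y : ℝ, 0 < x →
      Dt (fun t x _y => x * u _y (1 / x) t) t x y
        + x * Dy (fun t x _y => x * u _y (1 / x) t) t x y
        = x ^ (5 - β) * Dx (Dx (fun t x _y => x * u _y (1 / x) t)) t x y := by
  intro t x y hx
  have hx0 : x ≠ 0 := ne_of_gt hx
  set U : ℝ × ℝ × ℝ → ℝ := fun p => u p.1 p.2.1 p.2.2 with hUdef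
  have hUc : ContDiff ℝ (⊤ : ℕ∞) U := hu
  have hUd : Differentiable ℝ U := hUc.differentiable (by simp)
  set F : (ℝ × ℝ × ℝ) → (ℝ × ℝ × ℝ) →L[ℝ] ℝ := fderiv ℝ U with hFdef
  have hFc : ContDiff ℝ (⊤ : ℕ∞) F := hUc.fderiv_right (by simp)
  set G : ℝ × ℝ × ℝ → ℝ := fun p => F p (0, 1, 0) with hGdef
  have hGc : ContDiff ℝ (⊤ : ℕ∞) G := hFc.clm_apply contDiff_const
  have hGd : Differentiable ℝ G := hGc.differentiable (by simp)
  set H : ℝ × ℝ × ℝ → ℝ := fun p => fderiv ℝ G p (0, 1, 0) with hHdef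
  -- generic chain rule for lines
  have lineU : ∀ (γ : ℝ → ℝ × ℝ × ℝ) (γ' : ℝ × ℝ × ℝ) (b : ℝ), HasDerivAt γ γ' b →
      HasDerivAt (fun s => U (γ s)) (F (γ b) γ') b := by
    intro γ γ' b hγ
    exact (hUd (γ b)).hasFDerivAt.comp_hasDerivAt b hγ
  have lineG : ∀ (γ : ℝ → ℝ × ℝ × ℝ) (γ' : ℝ × ℝ × ℝ) (b : ℝ), HasDerivAt γ γ' b →
      HasDerivAt (fun s => G (γ s)) (fderiv ℝ G (γ b) γ') b := by
    intro γ γ' b hγ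
    exact (hGd (γ b)).hasFDerivAt.comp_hasDerivAt b hγ
  -- lines through points
  have lx : ∀ a c b : ℝ, HasDerivAt (fun s : ℝ => (a, s, c)) ((0:ℝ), (1:ℝ), (0:ℝ)) b := by
    intro a c b
    exact (hasDerivAt_const b a).prodMk ((hasDerivAt_id b).prodMk (hasDerivAt_const b c))
  have lt : ∀ a c b : ℝ, HasDerivAt (fun s : ℝ => (s, a, c)) ((1:ℝ), (0:ℝ), (0:ℝ)) b := by
    intro a c b
    exact (hasDerivAt_id b).prodMk ((hasDerivAt_const b a).prodMk (hasDerivAt_const b c))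
  have ly : ∀ a c b : ℝ, HasDerivAt (fun s : ℝ => (a, c, s)) ((0:ℝ), (0:ℝ), (1:ℝ)) b := by
    intro a c b
    exact (hasDerivAt_const b a).prodMk ((hasDerivAt_const b c).prodMk (hasDerivAt_id b))
  have linv : ∀ a c b : ℝ, b ≠ 0 →
      HasDerivAt (fun s : ℝ => (a, 1 / s, c)) ((0:ℝ), -(b^2)⁻¹, (0:ℝ)) b := by
    intro a c b hb
    have h1 : HasDerivAt (fun s : ℝ => 1 / s) (-(b^2)⁻¹) b := by
      simpa [one_div] using hasDerivAt_inv hb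
    exact (hasDerivAt_const b a).prodMk (h1.prodMk (hasDerivAt_const b c))
  -- partial derivatives of u
  have hDt : ∀ a b c : ℝ, Dt u a b c = F (a, b, c) (1, 0, 0) := fun a b c =>
    (lineU _ _ a (lt b c a)).deriv
  have hDxu : ∀ a b c : ℝ, Dx u a b c = G (a, b, c) := fun a b c =>
    (lineU _ _ b (lx a c b)).deriv
  have hDy : ∀ a b c : ℝ, Dy u a b c = F (a, b, c) (0, 0, 1) := fun a b c =>
    (lineU _ _ c (ly a b c)).deriv
  have hDxx : ∀ a b c : ℝ, Dx (Dx u) a b c = H (a, b, c) := by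
    intro a b c
    have : (fun s => Dx u a s c) = fun s => G (a, s, c) := funext fun s => hDxu a s c
    show deriv (fun s => Dx u a s c) b = _
    rw [this]
    exact (lineG _ _ b (lx a c b)).deriv
  -- smul decomposition of the inverse direction
  have hsmul : ∀ b : ℝ, ((0:ℝ), -(b^2)⁻¹, (0:ℝ)) = (-(b^2)⁻¹ : ℝ) • ((0:ℝ), (1:ℝ), (0:ℝ)) := by
    intro b; simp [Prod.smul_def]
  -- Dt v
  have hDtv : Dt (fun t x _y => x * u _y (1 / x) t) t x y = x * F (y, 1/x, t) (0, 0, 1) := by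
    show deriv (fun s => x * u y (1/x) s) t = _
    have h1 : HasDerivAt (fun s => U (y, 1/x, s)) (F (y, 1/x, t) (0, 0, 1)) t :=
      lineU _ _ t (ly y (1/x) t)
    exact (h1.const_mul x).deriv
  -- Dy v
  have hDyv : Dy (fun t x _y => x * u _y (1 / x) t) t x y = x * F (y, 1/x, t) (1, 0, 0) := by
    show deriv (fun s => x * u s (1/x) t) y = _
    have h1 : HasDerivAt (fun s => U (s, 1/x, t)) (F (y, 1/x, t) (1, 0, 0)) y :=
      lineU _ _ y (lt (1/x) t y)
    exact (h1.const_mul x).deriv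
  -- Dx v at any b ≠ 0
  have hDxv : ∀ b : ℝ, b ≠ 0 →
      Dx (fun t x _y => x * u _y (1 / x) t) t b y
        = U (y, 1/b, t) - (1/b) * G (y, 1/b, t) := by
    intro b hb
    show deriv (fun s => s * u y (1/s) t) b = _
    have h1 : HasDerivAt (fun s => U (y, 1/s, t)) (F (y, 1/b, t) (0, -(b^2)⁻¹, 0)) b :=
      lineU _ _ b (linv y t b hb)
    have h1' : HasDerivAt (fun s => U (y, 1/s, t)) (-(b^2)⁻¹ * G (y, 1/b, t)) b := by
      have := h1
      rwa [hsmul b, map_smul, smul_eq_mul] at this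
    have h2 : HasDerivAt (fun s : ℝ => s * U (y, 1/s, t))
        (1 * U (y, 1/b, t) + b * (-(b^2)⁻¹ * G (y, 1/b, t))) b :=
      (hasDerivAt_id b).mul h1'
    have := h2.deriv
    rw [this]
    field_simp
    ring
  -- Dx Dx v
  have hDxxv : Dx (Dx (fun t x _y => x * u _y (1 / x) t)) t x y
      = (x^3)⁻¹ * H (y, 1/x, t) := by
    show deriv (fun s => Dx (fun t x _y => x * u _y (1 / x) t) t s y) x = _
    have hev : (fun s => Dx (fun t x _y => x * u _y (1 / x) t) t s y)
        =ᶠ[nhds x] fun s => U (y, 1/s, t) - (1/s) * G (y, 1/s, t) := by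
      filter_upwards [eventually_ne_nhds hx0] with s hs
      exact hDxv s hs
    rw [hev.deriv_eq]
    have hA : HasDerivAt (fun s => U (y, 1/s, t)) (-(x^2)⁻¹ * G (y, 1/x, t)) x := by
      have := lineU _ _ x (linv y t x hx0)
      rwa [hsmul x, map_smul, smul_eq_mul] at this
    have hG1 : HasDerivAt (fun s => G (y, 1/s, t)) (-(x^2)⁻¹ * H (y, 1/x, t)) x := by
      have := lineG _ _ x (linv y t x hx0)
      rwa [hsmul x, map_smul, smul_eq_mul] at this
    have hinv : HasDerivAt (fun s : ℝ => 1 / s) (-(x^2)⁻¹) x := by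
      simpa [one_div] using hasDerivAt_inv hx0
    have hB : HasDerivAt (fun s : ℝ => (1/s) * G (y, 1/s, t))
        (-(x^2)⁻¹ * G (y, 1/x, t) + (1/x) * (-(x^2)⁻¹ * H (y, 1/x, t))) x :=
      hinv.mul hG1
    have hW := (hA.fun_sub hB).deriv
    rw [hW]
    field_simp
    ring
  -- use the PDE at (y, 1/x, t)
  have hxi : (0:ℝ) < 1/x := by positivity
  have hp := hpde y (1/x) t hxi
  rw [hDt, hDy, hDxx] at hp
  rw [hDtv, hDyv, hDxxv]
  have h1 : (1/x) ^ β = (x ^ β)⁻¹ := by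
    rw [one_div, Real.inv_rpow hx.le]
  have h5 : x ^ (5 - β) = x ^ (5:ℕ) / x ^ β := by
    rw [Real.rpow_sub hx, ← Real.rpow_natCast x 5]; norm_num
  have hxb : x ^ β ≠ 0 := ne_of_gt (Real.rpow_pos_of_pos hx β)
  rw [h1] at hp
  rw [h5]
  field_simp at hp ⊢
  linear_combination hp
end

section
/- Let β be a real number with β ∉ {0,2,3,5}, and let u : ℝ³ → ℝ be a smooth solution of u_t + x u_y = x^β u_{xx} on the region x > 0. For any constants α > 0, σ ≠ 0, λ₀, λ₁, the function ũ(t,x,y) := σ · u(α^{β−2} t − λ₀, x/α, α^{β−3} y − λ₁) is again a solution of the same equation on x > 0. -/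
private lemma deriv_affine (f : ℝ → ℝ) (hf : Differentiable ℝ f) (σ a b t : ℝ) :
    deriv (fun s => σ * f (a * s - b)) t = σ * (a * deriv f (a * t - b)) := by
  have h1 : HasDerivAt (fun s : ℝ => a * s - b) a t := by
    simpa using ((hasDerivAt_id t).const_mul a).sub_const b
  have h2 := ((hf (a * t - b)).hasDerivAt.comp t h1).const_mul σ
  have h3 := h2.deriv
  simp only [Function.comp] at h3
  rw [h3]; ring

private lemma deriv_scale (f : ℝ → ℝ) (hf : Differentiable ℝ f) (σ α t : ℝ) :
    deriv (fun s => σ * f (s / α)) t = σ * (α⁻¹ * deriv f (t / α)) := by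
  have h1 : HasDerivAt (fun s : ℝ => s / α) α⁻¹ t := by
    simpa [one_div] using (hasDerivAt_id t).div_const α
  have h2 := ((hf (t / α)).hasDerivAt.comp t h1).const_mul σ
  have h3 := h2.deriv
  simp only [Function.comp] at h3
  rw [h3]; ring

theorem stmt2 (β : ℝ) (hβ : β ≠ 0 ∧ β ≠ 2 ∧ β ≠ 3 ∧ β ≠ 5)
    (u : ℝ → ℝ → ℝ → ℝ)
    (hu : ContDiff ℝ (⊤ : ℕ∞) (fun p : ℝ × ℝ × ℝ => u p.1 p.2.1 p.2.2))
    (hpde : ∀ t x y : ℝ, 0 < x →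
      Dt u t x y + x * Dy u t x y = x ^ β * Dx (Dx u) t x y)
    (α σ l₀ l₁ : ℝ) (hα : 0 < α) (hσ : σ ≠ 0) :
    ∀ t x y : ℝ, 0 < x →
      Dt (fun t x y => σ * u (α ^ (β - 2) * t - l₀) (x / α) (α ^ (β - 3) * y - l₁)) t x y
        + x * Dy (fun t x y => σ * u (α ^ (β - 2) * t - l₀) (x / α) (α ^ (β - 3) * y - l₁)) t x y
        = x ^ β *
          Dx (Dx (fun t x y => σ * u (α ^ (β - 2) * t - l₀) (x / α) (α ^ (β - 3) * y - l₁))) t x y := by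
  intro t x y hx
  have hα' : α ≠ 0 := ne_of_gt hα
  -- slice smoothness
  have hslice_t : ∀ X Y : ℝ, ContDiff ℝ (⊤ : ℕ∞) (fun s => u s X Y) :=
    fun X Y => hu.comp (contDiff_id.prodMk (contDiff_const.prodMk contDiff_const))
  have hslice_x : ∀ T Y : ℝ, ContDiff ℝ (⊤ : ℕ∞) (fun s => u T s Y) :=
    fun T Y => hu.comp (contDiff_const.prodMk (contDiff_id.prodMk contDiff_const))
  have hslice_y : ∀ T X : ℝ, ContDiff ℝ (⊤ : ℕ∞) (fun s => u T X s) :=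
    fun T X => hu.comp (contDiff_const.prodMk (contDiff_const.prodMk contDiff_id))
  set T := α ^ (β - 2) * t - l₀ with hT
  set Y := α ^ (β - 3) * y - l₁ with hY
  set X := x / α with hX
  -- time derivative
  have eDt : Dt (fun t x y => σ * u (α ^ (β - 2) * t - l₀) (x / α) (α ^ (β - 3) * y - l₁)) t x y
      = σ * (α ^ (β - 2) * Dt u T X Y) := by
    have := deriv_affine (fun s => u s X Y)
      ((hslice_t X Y).differentiable (by simp)) σ (α ^ (β - 2)) l₀ t
    exact this
  -- y derivative
  have eDy : Dy (fun t x y => σ * u (α ^ (β - 2) * t - l₀) (x / α) (α ^ (β - 3) * y - l₁)) t x y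
      = σ * (α ^ (β - 3) * Dy u T X Y) := by
    have := deriv_affine (fun s => u T X s)
      ((hslice_y T X).differentiable (by simp)) σ (α ^ (β - 3)) l₁ y
    exact this
  -- first x derivative (at every point)
  have eDx : ∀ t' x' y' : ℝ,
      Dx (fun t x y => σ * u (α ^ (β - 2) * t - l₀) (x / α) (α ^ (β - 3) * y - l₁)) t' x' y'
      = σ * (α⁻¹ * Dx u (α ^ (β - 2) * t' - l₀) (x' / α) (α ^ (β - 3) * y' - l₁)) := by
    intro t' x' y'
    have := deriv_scale (fun s => u (α ^ (β - 2) * t' - l₀) s (α ^ (β - 3) * y' - l₁))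
      ((hslice_x _ _).differentiable (by simp)) σ α x'
    exact this
  -- second x derivative
  have eDxx : Dx (Dx (fun t x y => σ * u (α ^ (β - 2) * t - l₀) (x / α) (α ^ (β - 3) * y - l₁))) t x y
      = σ * (α⁻¹ * (α⁻¹ * Dx (Dx u) T X Y)) := by
    have hfun : (fun s => Dx (fun t x y => σ * u (α ^ (β - 2) * t - l₀) (x / α) (α ^ (β - 3) * y - l₁)) t s y)
        = fun s => (σ * α⁻¹) * (fun r => Dx u T r Y) (s / α) := by
      funext s
      simp only [eDx t s y, ← hT, ← hY]
      ring
    have hdiffDx : Differentiable ℝ (fun r => Dx u T r Y) := by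
      have h := (contDiff_infty_iff_deriv.mp ((hslice_x T Y).of_le (by simp))).2
      exact h.differentiable (by simp)
    have : Dx (Dx (fun t x y => σ * u (α ^ (β - 2) * t - l₀) (x / α) (α ^ (β - 3) * y - l₁))) t x y
        = deriv (fun s => (σ * α⁻¹) * (fun r => Dx u T r Y) (s / α)) x := by
      show deriv _ x = _
      rw [hfun]
    rw [this, deriv_scale _ hdiffDx]
    have : deriv (fun r => Dx u T r Y) (x / α) = Dx (Dx u) T X Y := rfl
    rw [this]; ring
  rw [eDt, eDy, eDxx]
  have hXpos : 0 < X := div_pos hx hα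
  have hpde' := hpde T X Y hXpos
  have key : X ^ β * α ^ β = x ^ β := by
    rw [← Real.mul_rpow (le_of_lt hXpos) (le_of_lt hα), hX, div_mul_cancel₀ _ hα']
  have hA : α ^ (β - 2) = α ^ β * α⁻¹ * α⁻¹ := by
    rw [show β - 2 = β + -1 + -1 by ring, Real.rpow_add hα, Real.rpow_add hα,
      Real.rpow_neg_one]
  have hB : α ^ (β - 3) = α ^ β * α⁻¹ * α⁻¹ * α⁻¹ := by
    rw [show β - 3 = β + -1 + -1 + -1 by ring, Real.rpow_add hα, Real.rpow_add hα,
      Real.rpow_add hα, Real.rpow_neg_one]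
  rw [hA, hB]
  have hXx : X = x * α⁻¹ := by rw [hX, div_eq_mul_inv]
  linear_combination (σ * α ^ β * α⁻¹ * α⁻¹) * hpde' + (σ * α⁻¹ * α⁻¹ * Dx (Dx u) T X Y) * key
    - (σ * α ^ β * α⁻¹ * α⁻¹ * Dy u T X Y) * hXx
end

section
/- Let u : ℝ³ → ℝ be a smooth solution of the remarkable Fokker–Planck equation u_t + x u_y = u_{xx}. Then for each of the following four first-order operators P applied to u, the function P u is again a solution: (i) P⁰u = u_y; (ii) P¹u = u_x + t u_y; (iii) P²u = 2t u_x + t² u_y + x u; (iv) P³u = 3t² u_x + t³ u_y − 3(y − t x) u. -/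
/-- `u` is a solution of the remarkable Fokker–Planck equation `u_t + x u_y = u_{xx}`. -/
def IsSol (u : ℝ → ℝ → ℝ → ℝ) : Prop :=
  ∀ t x y : ℝ, Dt u t x y + x * Dy u t x y = Dx (Dx u) t x y

namespace FPaux

abbrev E3 : Type := ℝ × ℝ × ℝ

noncomputable def P (v : E3) (F : E3 → ℝ) : E3 → ℝ := fun p => fderiv ℝ F p v

lemma P_smooth (v : E3) {F : E3 → ℝ} (h : ContDiff ℝ (⊤ : ℕ∞) F) : ContDiff ℝ (⊤ : ℕ∞) (P v F) :=
  (h.fderiv_right (by simp)).clm_apply contDiff_const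

lemma P_diff (v : E3) {F : E3 → ℝ} (h : ContDiff ℝ (⊤ : ℕ∞) F) : Differentiable ℝ (P v F) :=
  (P_smooth v h).differentiable (by simp)

lemma P_comm {F : E3 → ℝ} (h : ContDiff ℝ (⊤ : ℕ∞) F) (v w : E3) (p : E3) :
    P v (P w F) p = P w (P v F) p := by
  have hd : DifferentiableAt ℝ (fderiv ℝ F) p :=
    ((h.fderiv_right (m := (⊤ : ℕ∞)) (by simp)).differentiable (by simp)) p
  have hsymm := ((h.contDiffAt (x := p)).isSymmSndFDerivAt (by simp only [minSmoothness_of_isRCLikeNormedField]; exact WithTop.coe_le_coe.mpr le_top)).eq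
  have key : ∀ a b : E3, P a (P b F) p = fderiv ℝ (fderiv ℝ F) p a b := by
    intro a b
    show fderiv ℝ (fun q => (fderiv ℝ F q) b) p a = _
    rw [fderiv_clm_apply hd (differentiableAt_const b)]
    simp
  rw [key, key, hsymm]

lemma P_add {f g : E3 → ℝ} (hf : Differentiable ℝ f) (hg : Differentiable ℝ g) (v p) :
    P v (fun q => f q + g q) p = P v f p + P v g p := by
  simp [P, fderiv_fun_add (hf p) (hg p)]

lemma P_sub {f g : E3 → ℝ} (hf : Differentiable ℝ f) (hg : Differentiable ℝ g) (v p) :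
    P v (fun q => f q - g q) p = P v f p - P v g p := by
  simp [P, fderiv_fun_sub (hf p) (hg p)]

lemma P_mul {f g : E3 → ℝ} (hf : Differentiable ℝ f) (hg : Differentiable ℝ g) (v p) :
    P v (fun q => f q * g q) p = P v f p * g p + f p * P v g p := by
  simp [P, fderiv_fun_mul (hf p) (hg p)]; ring

lemma P_const (c : ℝ) (v p) : P v (fun _ : E3 => c) p = 0 := by simp [P]

lemma P_fst (v p) : P v (fun q : E3 => q.1) p = v.1 := by
  simp [P, fderiv_fst]

lemma P_x (v p) : P v (fun q : E3 => q.2.1) p = v.2.1 := by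
  have h : HasFDerivAt (fun q : E3 => q.2.1)
      ((ContinuousLinearMap.fst ℝ ℝ ℝ).comp (ContinuousLinearMap.snd ℝ ℝ (ℝ × ℝ))) p :=
    ((ContinuousLinearMap.fst ℝ ℝ ℝ).comp (ContinuousLinearMap.snd ℝ ℝ (ℝ × ℝ))).hasFDerivAt
  simp [P, h.fderiv]

lemma P_y (v p) : P v (fun q : E3 => q.2.2) p = v.2.2 := by
  have h : HasFDerivAt (fun q : E3 => q.2.2)
      ((ContinuousLinearMap.snd ℝ ℝ ℝ).comp (ContinuousLinearMap.snd ℝ ℝ (ℝ × ℝ))) p :=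
    ((ContinuousLinearMap.snd ℝ ℝ ℝ).comp (ContinuousLinearMap.snd ℝ ℝ (ℝ × ℝ))).hasFDerivAt
  simp [P, h.fderiv]

lemma Dt_eq {w : ℝ → ℝ → ℝ → ℝ} {G : E3 → ℝ} (hG : Differentiable ℝ G)
    (hw : ∀ a b c : ℝ, w a b c = G (a, b, c)) (t x y : ℝ) :
    Dt w t x y = P (1, 0, 0) G (t, x, y) := by
  have hg : HasDerivAt (fun s : ℝ => ((s, x, y) : E3)) (1, 0, 0) t :=
    (hasDerivAt_id t).prodMk (hasDerivAt_const t ((x, y) : ℝ × ℝ))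
  have h := (hG (t, x, y)).hasFDerivAt.comp_hasDerivAt t hg
  have he : (fun s => w s x y) = fun s => G (s, x, y) := funext fun s => hw s x y
  rw [Dt, he]
  exact h.deriv

lemma Dx_eq {w : ℝ → ℝ → ℝ → ℝ} {G : E3 → ℝ} (hG : Differentiable ℝ G)
    (hw : ∀ a b c : ℝ, w a b c = G (a, b, c)) (t x y : ℝ) :
    Dx w t x y = P (0, 1, 0) G (t, x, y) := by
  have hg : HasDerivAt (fun s : ℝ => ((t, s, y) : E3)) (0, 1, 0) x :=
    (hasDerivAt_const x t).prodMk ((hasDerivAt_id x).prodMk (hasDerivAt_const x y))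
  have h := (hG (t, x, y)).hasFDerivAt.comp_hasDerivAt x hg
  have he : (fun s => w t s y) = fun s => G (t, s, y) := funext fun s => hw t s y
  rw [Dx, he]
  exact h.deriv

lemma Dy_eq {w : ℝ → ℝ → ℝ → ℝ} {G : E3 → ℝ} (hG : Differentiable ℝ G)
    (hw : ∀ a b c : ℝ, w a b c = G (a, b, c)) (t x y : ℝ) :
    Dy w t x y = P (0, 0, 1) G (t, x, y) := by
  have hg : HasDerivAt (fun s : ℝ => ((t, x, s) : E3)) (0, 0, 1) y :=
    (hasDerivAt_const y t).prodMk ((hasDerivAt_const y x).prodMk (hasDerivAt_id y))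
  have h := (hG (t, x, y)).hasFDerivAt.comp_hasDerivAt y hg
  have he : (fun s => w t x s) = fun s => G (t, x, s) := funext fun s => hw t x s
  rw [Dy, he]
  exact h.deriv

lemma isSol_of {w : ℝ → ℝ → ℝ → ℝ} {G : E3 → ℝ} (hG : ContDiff ℝ (⊤ : ℕ∞) G)
    (hw : ∀ a b c : ℝ, w a b c = G (a, b, c))
    (h : ∀ p : E3, P (1, 0, 0) G p + p.2.1 * P (0, 0, 1) G p = P (0, 1, 0) (P (0, 1, 0) G) p) :
    IsSol w := by
  intro t x y
  have dG := hG.differentiable (by simp)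
  rw [Dt_eq dG hw, Dy_eq dG hw,
    Dx_eq (P_diff _ hG) (fun a b c => Dx_eq dG hw a b c)]
  exact h (t, x, y)

section keys

variable {F : E3 → ℝ} (hF : ContDiff ℝ (⊤ : ℕ∞) F)
include hF

lemma hEd (hE : ∀ p : E3, P (1, 0, 0) F p + p.2.1 * P (0, 0, 1) F p
      = P (0, 1, 0) (P (0, 1, 0) F) p) (v p : E3) :
    P v (P (0, 1, 0) (P (0, 1, 0) F)) p
      = P v (P (1, 0, 0) F) p + v.2.1 * P (0, 0, 1) F p + p.2.1 * P v (P (0, 0, 1) F) p := by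
  have dA : Differentiable ℝ (P (1, 0, 0) F) := P_diff _ hF
  have dC : Differentiable ℝ (P (0, 0, 1) F) := P_diff _ hF
  have hEfun : (fun q : E3 => P (1, 0, 0) F q + q.2.1 * P (0, 0, 1) F q)
      = P (0, 1, 0) (P (0, 1, 0) F) := funext hE
  rw [← hEfun]
  simp (disch := fun_prop) only [P_add, P_mul, P_x]
  ring

lemma key0 (hE : ∀ p : E3, P (1, 0, 0) F p + p.2.1 * P (0, 0, 1) F p
      = P (0, 1, 0) (P (0, 1, 0) F) p) (p : E3) :
    P (1, 0, 0) (P (0, 0, 1) F) p + p.2.1 * P (0, 0, 1) (P (0, 0, 1) F) p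
      = P (0, 1, 0) (P (0, 1, 0) (P (0, 0, 1) F)) p := by
  have hEd3 := hEd hF hE (0, 0, 1) p
  norm_num at hEd3
  have c13 := P_comm hF (1, 0, 0) (0, 0, 1) p
  have c23f : P (0, 0, 1) (P (0, 1, 0) F) = P (0, 1, 0) (P (0, 0, 1) F) :=
    funext (P_comm hF (0, 0, 1) (0, 1, 0))
  have t322 : P (0, 0, 1) (P (0, 1, 0) (P (0, 1, 0) F)) p
      = P (0, 1, 0) (P (0, 1, 0) (P (0, 0, 1) F)) p := by
    rw [P_comm (P_smooth (0, 1, 0) hF) (0, 0, 1) (0, 1, 0) p, c23f]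
  linear_combination c13 - hEd3 + t322

lemma key1 (hE : ∀ p : E3, P (1, 0, 0) F p + p.2.1 * P (0, 0, 1) F p
      = P (0, 1, 0) (P (0, 1, 0) F) p) (p : E3) :
    P (1, 0, 0) (fun q => P (0, 1, 0) F q + q.1 * P (0, 0, 1) F q) p
      + p.2.1 * P (0, 0, 1) (fun q => P (0, 1, 0) F q + q.1 * P (0, 0, 1) F q) p
      = P (0, 1, 0) (P (0, 1, 0) (fun q => P (0, 1, 0) F q + q.1 * P (0, 0, 1) F q)) p := by
  obtain ⟨t, x, y⟩ := p
  have dF := hF.differentiable (by simp)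
  have dB : Differentiable ℝ (P (0, 1, 0) F) := P_diff _ hF
  have dC : Differentiable ℝ (P (0, 0, 1) F) := P_diff _ hF
  have dBB : Differentiable ℝ (P (0, 1, 0) (P (0, 1, 0) F)) := P_diff _ (P_smooth _ hF)
  have dBC : Differentiable ℝ (P (0, 1, 0) (P (0, 0, 1) F)) := P_diff _ (P_smooth _ hF)
  have e2G : P (0, 1, 0) (fun q => P (0, 1, 0) F q + q.1 * P (0, 0, 1) F q)
      = fun q => P (0, 1, 0) (P (0, 1, 0) F) q + q.1 * P (0, 1, 0) (P (0, 0, 1) F) q := by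
    funext q
    simp (disch := fun_prop) only [P_add, P_mul, P_fst]
    norm_num
  rw [e2G]
  simp (disch := fun_prop) only [P_add, P_mul, P_fst]
  norm_num
  have hEd2 := hEd hF hE (0, 1, 0) (t, x, y); norm_num at hEd2
  have hEd3 := hEd hF hE (0, 0, 1) (t, x, y); norm_num at hEd3
  have c12 := P_comm hF (1, 0, 0) (0, 1, 0) (t, x, y)
  have c13 := P_comm hF (1, 0, 0) (0, 0, 1) (t, x, y)
  have c23 := P_comm hF (0, 0, 1) (0, 1, 0) (t, x, y)
  have c23f : P (0, 0, 1) (P (0, 1, 0) F) = P (0, 1, 0) (P (0, 0, 1) F) :=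
    funext (P_comm hF (0, 0, 1) (0, 1, 0))
  have t322 : P (0, 0, 1) (P (0, 1, 0) (P (0, 1, 0) F)) (t, x, y)
      = P (0, 1, 0) (P (0, 1, 0) (P (0, 0, 1) F)) (t, x, y) := by
    rw [P_comm (P_smooth (0, 1, 0) hF) (0, 0, 1) (0, 1, 0) (t, x, y), c23f]
  linear_combination c12 + t * c13 + x * c23 - hEd2 - t * hEd3 + t * t322

lemma key2 (hE : ∀ p : E3, P (1, 0, 0) F p + p.2.1 * P (0, 0, 1) F p
      = P (0, 1, 0) (P (0, 1, 0) F) p) (p : E3) :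
    P (1, 0, 0) (fun q => 2 * q.1 * P (0, 1, 0) F q + q.1 * q.1 * P (0, 0, 1) F q
        + q.2.1 * F q) p
      + p.2.1 * P (0, 0, 1) (fun q => 2 * q.1 * P (0, 1, 0) F q + q.1 * q.1 * P (0, 0, 1) F q
        + q.2.1 * F q) p
      = P (0, 1, 0) (P (0, 1, 0) (fun q => 2 * q.1 * P (0, 1, 0) F q
        + q.1 * q.1 * P (0, 0, 1) F q + q.2.1 * F q)) p := by
  obtain ⟨t, x, y⟩ := p
  have dF := hF.differentiable (by simp)
  have dB : Differentiable ℝ (P (0, 1, 0) F) := P_diff _ hF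
  have dC : Differentiable ℝ (P (0, 0, 1) F) := P_diff _ hF
  have dBB : Differentiable ℝ (P (0, 1, 0) (P (0, 1, 0) F)) := P_diff _ (P_smooth _ hF)
  have dBC : Differentiable ℝ (P (0, 1, 0) (P (0, 0, 1) F)) := P_diff _ (P_smooth _ hF)
  have e2G : P (0, 1, 0) (fun q => 2 * q.1 * P (0, 1, 0) F q + q.1 * q.1 * P (0, 0, 1) F q
        + q.2.1 * F q)
      = fun q => 2 * q.1 * P (0, 1, 0) (P (0, 1, 0) F) q
        + q.1 * q.1 * P (0, 1, 0) (P (0, 0, 1) F) q + F q + q.2.1 * P (0, 1, 0) F q := by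
    funext q
    simp (disch := fun_prop) only [P_add, P_mul, P_fst, P_x, P_const]
    norm_num
    ring
  rw [e2G]
  simp (disch := fun_prop) only [P_add, P_mul, P_fst, P_x, P_const]
  norm_num
  have hEp := hE (t, x, y); norm_num at hEp
  have hEd2 := hEd hF hE (0, 1, 0) (t, x, y); norm_num at hEd2
  have hEd3 := hEd hF hE (0, 0, 1) (t, x, y); norm_num at hEd3
  have c12 := P_comm hF (1, 0, 0) (0, 1, 0) (t, x, y)
  have c13 := P_comm hF (1, 0, 0) (0, 0, 1) (t, x, y)
  have c23 := P_comm hF (0, 0, 1) (0, 1, 0) (t, x, y)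
  have c23f : P (0, 0, 1) (P (0, 1, 0) F) = P (0, 1, 0) (P (0, 0, 1) F) :=
    funext (P_comm hF (0, 0, 1) (0, 1, 0))
  have t322 : P (0, 0, 1) (P (0, 1, 0) (P (0, 1, 0) F)) (t, x, y)
      = P (0, 1, 0) (P (0, 1, 0) (P (0, 0, 1) F)) (t, x, y) := by
    rw [P_comm (P_smooth (0, 1, 0) hF) (0, 0, 1) (0, 1, 0) (t, x, y), c23f]
  linear_combination 2 * t * c12 - 2 * t * hEd2 + t ^ 2 * c13 - t ^ 2 * hEd3
    + t ^ 2 * t322 + 2 * t * x * c23 + x * hEp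

lemma key3 (hE : ∀ p : E3, P (1, 0, 0) F p + p.2.1 * P (0, 0, 1) F p
      = P (0, 1, 0) (P (0, 1, 0) F) p) (p : E3) :
    P (1, 0, 0) (fun q => 3 * q.1 * q.1 * P (0, 1, 0) F q + q.1 * q.1 * q.1 * P (0, 0, 1) F q
        - 3 * (q.2.2 - q.1 * q.2.1) * F q) p
      + p.2.1 * P (0, 0, 1) (fun q => 3 * q.1 * q.1 * P (0, 1, 0) F q
        + q.1 * q.1 * q.1 * P (0, 0, 1) F q - 3 * (q.2.2 - q.1 * q.2.1) * F q) p
      = P (0, 1, 0) (P (0, 1, 0) (fun q => 3 * q.1 * q.1 * P (0, 1, 0) F q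
        + q.1 * q.1 * q.1 * P (0, 0, 1) F q - 3 * (q.2.2 - q.1 * q.2.1) * F q)) p := by
  obtain ⟨t, x, y⟩ := p
  have dF := hF.differentiable (by simp)
  have dB : Differentiable ℝ (P (0, 1, 0) F) := P_diff _ hF
  have dC : Differentiable ℝ (P (0, 0, 1) F) := P_diff _ hF
  have dBB : Differentiable ℝ (P (0, 1, 0) (P (0, 1, 0) F)) := P_diff _ (P_smooth _ hF)
  have dBC : Differentiable ℝ (P (0, 1, 0) (P (0, 0, 1) F)) := P_diff _ (P_smooth _ hF)
  have e2G : P (0, 1, 0) (fun q => 3 * q.1 * q.1 * P (0, 1, 0) F q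
        + q.1 * q.1 * q.1 * P (0, 0, 1) F q - 3 * (q.2.2 - q.1 * q.2.1) * F q)
      = fun q => 3 * q.1 * q.1 * P (0, 1, 0) (P (0, 1, 0) F) q
        + q.1 * q.1 * q.1 * P (0, 1, 0) (P (0, 0, 1) F) q + 3 * q.1 * F q
        - 3 * (q.2.2 - q.1 * q.2.1) * P (0, 1, 0) F q := by
    funext q
    simp (disch := fun_prop) only [P_add, P_sub, P_mul, P_fst, P_x, P_y, P_const]
    norm_num
    ring
  rw [e2G]
  simp (disch := fun_prop) only [P_add, P_sub, P_mul, P_fst, P_x, P_y, P_const]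
  norm_num
  have hEp := hE (t, x, y); norm_num at hEp
  have hEd2 := hEd hF hE (0, 1, 0) (t, x, y); norm_num at hEd2
  have hEd3 := hEd hF hE (0, 0, 1) (t, x, y); norm_num at hEd3
  have c12 := P_comm hF (1, 0, 0) (0, 1, 0) (t, x, y)
  have c13 := P_comm hF (1, 0, 0) (0, 0, 1) (t, x, y)
  have c23 := P_comm hF (0, 0, 1) (0, 1, 0) (t, x, y)
  have c23f : P (0, 0, 1) (P (0, 1, 0) F) = P (0, 1, 0) (P (0, 0, 1) F) :=
    funext (P_comm hF (0, 0, 1) (0, 1, 0))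
  have t322 : P (0, 0, 1) (P (0, 1, 0) (P (0, 1, 0) F)) (t, x, y)
      = P (0, 1, 0) (P (0, 1, 0) (P (0, 0, 1) F)) (t, x, y) := by
    rw [P_comm (P_smooth (0, 1, 0) hF) (0, 0, 1) (0, 1, 0) (t, x, y), c23f]
  linear_combination 3 * t ^ 2 * c12 - 3 * t ^ 2 * hEd2 + t ^ 3 * c13 - t ^ 3 * hEd3
    + t ^ 3 * t322 + 3 * t ^ 2 * x * c23 - 3 * (y - t * x) * hEp

end keys

end FPaux

theorem stmt3 (u : ℝ → ℝ → ℝ → ℝ)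
    (hu : ContDiff ℝ (⊤ : ℕ∞) (fun p : ℝ × ℝ × ℝ => u p.1 p.2.1 p.2.2))
    (hsol : IsSol u) :
    IsSol (Dy u) ∧
    IsSol (fun t x y => Dx u t x y + t * Dy u t x y) ∧
    IsSol (fun t x y => 2 * t * Dx u t x y + t ^ 2 * Dy u t x y + x * u t x y) ∧
    IsSol (fun t x y => 3 * t ^ 2 * Dx u t x y + t ^ 3 * Dy u t x y - 3 * (y - t * x) * u t x y) := by
  open FPaux in
  set F : FPaux.E3 → ℝ := fun p => u p.1 p.2.1 p.2.2 with hFdef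
  have hF : ContDiff ℝ (⊤ : ℕ∞) F := hu
  have dF : Differentiable ℝ F := hF.differentiable (by simp)
  have hrfl : ∀ a b c : ℝ, u a b c = F (a, b, c) := fun _ _ _ => rfl
  have sB := FPaux.P_smooth (0, 1, 0) hF
  have sC := FPaux.P_smooth (0, 0, 1) hF
  have hE : ∀ p : FPaux.E3, FPaux.P (1, 0, 0) F p + p.2.1 * FPaux.P (0, 0, 1) F p
      = FPaux.P (0, 1, 0) (FPaux.P (0, 1, 0) F) p := by
    rintro ⟨t, x, y⟩
    have h := hsol t x y
    rw [FPaux.Dt_eq dF hrfl, FPaux.Dy_eq dF hrfl,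
      FPaux.Dx_eq (FPaux.P_diff _ hF) (fun a b c => FPaux.Dx_eq dF hrfl a b c)] at h
    exact h
  refine ⟨?_, ?_, ?_, ?_⟩
  · exact FPaux.isSol_of (FPaux.P_smooth _ hF)
      (fun a b c => FPaux.Dy_eq dF hrfl a b c) (FPaux.key0 hF hE)
  · have hG : ContDiff ℝ (⊤ : ℕ∞)
        (fun q : FPaux.E3 => FPaux.P (0, 1, 0) F q + q.1 * FPaux.P (0, 0, 1) F q) := by
      fun_prop
    exact FPaux.isSol_of hG
      (fun a b c => by
        simp only [FPaux.Dx_eq dF hrfl a b c, FPaux.Dy_eq dF hrfl a b c])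
      (FPaux.key1 hF hE)
  · have hG : ContDiff ℝ (⊤ : ℕ∞)
        (fun q : FPaux.E3 => 2 * q.1 * FPaux.P (0, 1, 0) F q
          + q.1 * q.1 * FPaux.P (0, 0, 1) F q + q.2.1 * F q) := by
      fun_prop
    exact FPaux.isSol_of hG
      (fun a b c => by
        simp only [FPaux.Dx_eq dF hrfl a b c, FPaux.Dy_eq dF hrfl a b c, hrfl a b c]
        ring)
      (FPaux.key2 hF hE)
  · have hG : ContDiff ℝ (⊤ : ℕ∞)
        (fun q : FPaux.E3 => 3 * q.1 * q.1 * FPaux.P (0, 1, 0) F q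
          + q.1 * q.1 * q.1 * FPaux.P (0, 0, 1) F q - 3 * (q.2.2 - q.1 * q.2.1) * F q) := by
      fun_prop
    exact FPaux.isSol_of hG
      (fun a b c => by
        simp only [FPaux.Dx_eq dF hrfl a b c, FPaux.Dy_eq dF hrfl a b c, hrfl a b c]
        ring)
      (FPaux.key3 hF hE)
end

section
/- Let θ : ℝ² → ℝ be a smooth solution of the heat equation θ_s = θ_{zz}. Then u(t,x,y) := θ(t³/3, y − t x) is a smooth solution of the remarkable Fokker–Planck equation u_t + x u_y = u_{xx}. -/
/-- Partial derivative of a two-variable function in its first argument. -/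
noncomputable def dS (θ : ℝ → ℝ → ℝ) : ℝ → ℝ → ℝ :=
  fun s z => deriv (fun a => θ a z) s

/-- Partial derivative of a two-variable function in its second argument. -/
noncomputable def dZ (θ : ℝ → ℝ → ℝ) : ℝ → ℝ → ℝ :=
  fun s z => deriv (θ s) z

lemma keylem (H : ℝ × ℝ → ℝ) (hH : Differentiable ℝ H) (g₁ g₂ : ℝ → ℝ) (a b s : ℝ)
    (h1 : HasDerivAt g₁ a s) (h2 : HasDerivAt g₂ b s) :
    HasDerivAt (fun r => H (g₁ r, g₂ r))
      (a * fderiv ℝ H (g₁ s, g₂ s) (1, 0) + b * fderiv ℝ H (g₁ s, g₂ s) (0, 1)) s := by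
  have hcomp := (hH (g₁ s, g₂ s)).hasFDerivAt.comp_hasDerivAt s (h1.prodMk h2)
  have hab : ((a, b) : ℝ × ℝ) = a • ((1:ℝ), (0:ℝ)) + b • ((0:ℝ), (1:ℝ)) := by
    simp [Prod.ext_iff]
  have : fderiv ℝ H (g₁ s, g₂ s) (a, b)
      = a * fderiv ℝ H (g₁ s, g₂ s) (1, 0) + b * fderiv ℝ H (g₁ s, g₂ s) (0, 1) := by
    rw [hab, map_add, map_smul, map_smul]; simp
  rwa [this] at hcomp

theorem stmt6 (θ : ℝ → ℝ → ℝ)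
    (hθ : ContDiff ℝ (⊤ : ℕ∞) (fun p : ℝ × ℝ => θ p.1 p.2))
    (hheat : ∀ s z : ℝ, dS θ s z = dZ (dZ θ) s z) :
    ∀ t x y : ℝ,
      Dt (fun t x y => θ (t ^ 3 / 3) (y - t * x)) t x y
        + x * Dy (fun t x y => θ (t ^ 3 / 3) (y - t * x)) t x y
        = Dx (Dx (fun t x y => θ (t ^ 3 / 3) (y - t * x))) t x y := by
  intro t x y
  set F : ℝ × ℝ → ℝ := fun p => θ p.1 p.2 with hFdef
  have hFd : Differentiable ℝ F := hθ.differentiable (by simp)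
  have hGc : ContDiff ℝ (⊤ : ℕ∞) (fun p : ℝ × ℝ => fderiv ℝ F p (0, 1)) :=
    (hθ.fderiv_right (by simp)).clm_apply contDiff_const
  set G : ℝ × ℝ → ℝ := fun p => fderiv ℝ F p (0, 1) with hGdef
  have hGd : Differentiable ℝ G := hGc.differentiable (by simp)
  -- basic one-dimensional derivatives
  have hcube : HasDerivAt (fun s : ℝ => s ^ 3 / 3) (t ^ 2) t := by
    have := (hasDerivAt_pow 3 t).div_const 3
    simpa using this.congr_deriv (by ring)
  have hlin1 : HasDerivAt (fun s : ℝ => y - s * x) (-x) t := by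
    simpa using ((hasDerivAt_id t).mul_const x).const_sub y
  have hlin2 : HasDerivAt (fun s : ℝ => s - t * x) (1 : ℝ) y :=
    (hasDerivAt_id y).sub_const (t * x)
  have hlin3 : ∀ s : ℝ, HasDerivAt (fun r : ℝ => y - t * r) (-t) s := by
    intro s
    simpa using ((hasDerivAt_id s).const_mul t).const_sub y
  -- identify dZ θ with G
  have hdZ : ∀ s z : ℝ, dZ θ s z = G (s, z) := by
    intro s z
    have h := keylem F hFd (fun _ => s) (fun a => a) 0 1 z
      (hasDerivAt_const z s) (hasDerivAt_id z)
    have := h.deriv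
    simpa [dZ] using this
  have hdS : ∀ s z : ℝ, dS θ s z = fderiv ℝ F (s, z) (1, 0) := by
    intro s z
    have h := keylem F hFd (fun a => a) (fun _ => z) 1 0 s
      (hasDerivAt_id s) (hasDerivAt_const s z)
    have := h.deriv
    simpa [dS] using this
  have hdZZ : ∀ s z : ℝ, dZ (dZ θ) s z = fderiv ℝ G (s, z) (0, 1) := by
    intro s z
    have hfun : (dZ θ) s = fun a => G (s, a) := funext fun a => hdZ s a
    have h := keylem G hGd (fun _ => s) (fun a => a) 0 1 z
      (hasDerivAt_const z s) (hasDerivAt_id z)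
    have := h.deriv
    simp only [dZ]
    rw [hfun]
    simpa using this
  -- the three partials of u
  have hDt : Dt (fun t x y => θ (t ^ 3 / 3) (y - t * x)) t x y
      = t ^ 2 * fderiv ℝ F (t ^ 3 / 3, y - t * x) (1, 0)
        + (-x) * G (t ^ 3 / 3, y - t * x) := by
    have h := keylem F hFd (fun s => s ^ 3 / 3) (fun s => y - s * x) (t ^ 2) (-x) t
      hcube hlin1
    simpa [Dt, hGdef] using h.deriv
  have hDy : Dy (fun t x y => θ (t ^ 3 / 3) (y - t * x)) t x y
      = G (t ^ 3 / 3, y - t * x) := by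
    have h := keylem F hFd (fun _ => t ^ 3 / 3) (fun s => s - t * x) 0 1 y
      (hasDerivAt_const y (t ^ 3 / 3)) hlin2
    simpa [Dy, hGdef] using h.deriv
  have hDx : ∀ s : ℝ, Dx (fun t x y => θ (t ^ 3 / 3) (y - t * x)) t s y
      = (-t) * G (t ^ 3 / 3, y - t * s) := by
    intro s
    have h := keylem F hFd (fun _ => t ^ 3 / 3) (fun r => y - t * r) 0 (-t) s
      (hasDerivAt_const s (t ^ 3 / 3)) (hlin3 s)
    simpa [Dx, hGdef] using h.deriv
  have hDxx : Dx (Dx (fun t x y => θ (t ^ 3 / 3) (y - t * x))) t x y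
      = t ^ 2 * fderiv ℝ G (t ^ 3 / 3, y - t * x) (0, 1) := by
    have hfun : (fun s => Dx (fun t x y => θ (t ^ 3 / 3) (y - t * x)) t s y)
        = fun s => (-t) * G (t ^ 3 / 3, y - t * s) := funext hDx
    have h := (keylem G hGd (fun _ => t ^ 3 / 3) (fun r => y - t * r) 0 (-t) x
      (hasDerivAt_const x (t ^ 3 / 3)) (hlin3 x)).const_mul (-t)
    have hd := h.deriv
    show deriv (fun s => Dx (fun t x y => θ (t ^ 3 / 3) (y - t * x)) t s y) x = _
    rw [hfun, hd]; ring
  rw [hDt, hDy, hDxx]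
  have hheat' : fderiv ℝ F (t ^ 3 / 3, y - t * x) (1, 0)
      = fderiv ℝ G (t ^ 3 / 3, y - t * x) (0, 1) := by
    have := hheat (t ^ 3 / 3) (y - t * x)
    rwa [hdS, hdZZ] at this
  rw [hheat']; ring
end

section
/- Let θ : ℝ² → ℝ be smooth with θ_s = θ_{zz}. For t > 0 and ε ∈ {−1, 1}, the function u(t,x,y) := t^{−1/2} · exp(−x²/(4t)) · θ(t³/3 + 2εt − 1/t, 2y − (t + ε/t)x) is a solution of u_t + x u_y = u_{xx} on the region t > 0. -/
theorem aux_dS_eq (ψ : ℝ → ℝ → ℝ)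
    (hψ : ContDiff ℝ (⊤ : ℕ∞) (fun p : ℝ × ℝ => ψ p.1 p.2)) (p : ℝ × ℝ) :
    dS ψ p.1 p.2 = fderiv ℝ (fun p : ℝ × ℝ => ψ p.1 p.2) p ((1 : ℝ), (0 : ℝ)) := by
  have hF := (hψ.differentiable (by simp) p).hasFDerivAt
  have hc : HasDerivAt (fun a : ℝ => ((a, p.2) : ℝ × ℝ)) ((1 : ℝ), (0 : ℝ)) p.1 :=
    (hasDerivAt_id p.1).prodMk (hasDerivAt_const p.1 p.2)
  have := hF.comp_hasDerivAt p.1 (by simpa using hc)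
  simpa [dS, Function.comp_def] using this.deriv

theorem aux_dZ_eq (ψ : ℝ → ℝ → ℝ)
    (hψ : ContDiff ℝ (⊤ : ℕ∞) (fun p : ℝ × ℝ => ψ p.1 p.2)) (p : ℝ × ℝ) :
    dZ ψ p.1 p.2 = fderiv ℝ (fun p : ℝ × ℝ => ψ p.1 p.2) p ((0 : ℝ), (1 : ℝ)) := by
  have hF := (hψ.differentiable (by simp) p).hasFDerivAt
  have hc : HasDerivAt (fun a : ℝ => ((p.1, a) : ℝ × ℝ)) ((0 : ℝ), (1 : ℝ)) p.2 :=
    (hasDerivAt_const p.2 p.1).prodMk (hasDerivAt_id p.2)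
  have := hF.comp_hasDerivAt p.2 (by simpa using hc)
  simpa [dZ, Function.comp_def] using this.deriv

theorem aux_comp2 (ψ : ℝ → ℝ → ℝ)
    (hψ : ContDiff ℝ (⊤ : ℕ∞) (fun p : ℝ × ℝ => ψ p.1 p.2))
    {f g : ℝ → ℝ} {f' g' t : ℝ}
    (hf : HasDerivAt f f' t) (hg : HasDerivAt g g' t) :
    HasDerivAt (fun a => ψ (f a) (g a))
      (dS ψ (f t) (g t) * f' + dZ ψ (f t) (g t) * g') t := by
  have hF := (hψ.differentiable (by simp) (f t, g t)).hasFDerivAt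
  have h := hF.comp_hasDerivAt t (hf.prodMk hg)
  refine h.congr_deriv ?_
  rw [aux_dS_eq ψ hψ (f t, g t), aux_dZ_eq ψ hψ (f t, g t)]
  have : ((f', g') : ℝ × ℝ) = f' • ((1 : ℝ), (0 : ℝ)) + g' • ((0 : ℝ), (1 : ℝ)) := by
    simp [Prod.ext_iff]
  rw [this, map_add, map_smul, map_smul]
  simp [mul_comm]

theorem aux_dZ_contDiff (ψ : ℝ → ℝ → ℝ)
    (hψ : ContDiff ℝ (⊤ : ℕ∞) (fun p : ℝ × ℝ => ψ p.1 p.2)) :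
    ContDiff ℝ (⊤ : ℕ∞) (fun p : ℝ × ℝ => dZ ψ p.1 p.2) := by
  have h : (fun p : ℝ × ℝ => dZ ψ p.1 p.2)
      = fun p : ℝ × ℝ => fderiv ℝ (fun p : ℝ × ℝ => ψ p.1 p.2) p ((0 : ℝ), (1 : ℝ)) := by
    funext p
    exact aux_dZ_eq ψ hψ p
  rw [h]
  exact (hψ.fderiv_right (by simp)).clm_apply contDiff_const

theorem stmt7 (θ : ℝ → ℝ → ℝ)
    (hθ : ContDiff ℝ (⊤ : ℕ∞) (fun p : ℝ × ℝ => θ p.1 p.2))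
    (hheat : ∀ s z : ℝ, dS θ s z = dZ (dZ θ) s z)
    (ε : ℝ) (hε : ε = -1 ∨ ε = 1) :
    ∀ t x y : ℝ, 0 < t →
      Dt (fun t x y => t ^ (-(1 : ℝ) / 2) * Real.exp (-x ^ 2 / (4 * t)) *
            θ (t ^ 3 / 3 + 2 * ε * t - 1 / t) (2 * y - (t + ε / t) * x)) t x y
        + x * Dy (fun t x y => t ^ (-(1 : ℝ) / 2) * Real.exp (-x ^ 2 / (4 * t)) *
            θ (t ^ 3 / 3 + 2 * ε * t - 1 / t) (2 * y - (t + ε / t) * x)) t x y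
        = Dx (Dx (fun t x y => t ^ (-(1 : ℝ) / 2) * Real.exp (-x ^ 2 / (4 * t)) *
            θ (t ^ 3 / 3 + 2 * ε * t - 1 / t) (2 * y - (t + ε / t) * x))) t x y := by
  have hε2 : ε ^ 2 = 1 := by rcases hε with h | h <;> simp [h]
  have hG := aux_dZ_contDiff θ hθ
  intro t x y ht
  have ht' : t ≠ 0 := ne_of_gt ht
  -- abbreviations
  set P : ℝ := t ^ (-(1 : ℝ) / 2) with hP
  set s0 : ℝ := t ^ 3 / 3 + 2 * ε * t - 1 / t with hs0
  set z0 : ℝ := 2 * y - (t + ε / t) * x with hz0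
  -- basic 1d derivatives
  have h_rpow : HasDerivAt (fun s : ℝ => s ^ (-(1 : ℝ) / 2))
      (-(1 : ℝ) / 2 * t ^ (-(1 : ℝ) / 2 - 1)) t :=
    Real.hasDerivAt_rpow_const (Or.inl ht')
  have h_expT : HasDerivAt (fun s : ℝ => Real.exp (-x ^ 2 / (4 * s)))
      (Real.exp (-x ^ 2 / (4 * t)) * (x ^ 2 / (4 * t ^ 2))) t := by
    have h := ((hasDerivAt_const t (-x ^ 2)).fun_div ((hasDerivAt_id t).const_mul 4)
      (by positivity)).exp
    refine h.congr_deriv ?_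
    simp only [id]
    field_simp
    ring
  have h_curveS : HasDerivAt (fun s : ℝ => s ^ 3 / 3 + 2 * ε * s - 1 / s)
      (t ^ 2 + 2 * ε + 1 / t ^ 2) t := by
    have hinv : HasDerivAt (fun s : ℝ => 1 / s) (-(t ^ 2)⁻¹) t := by
      simpa [one_div] using hasDerivAt_inv ht'
    have h := (((hasDerivAt_pow 3 t).div_const 3).fun_add
      ((hasDerivAt_id t).const_mul (2 * ε))).fun_sub hinv
    refine h.congr_deriv ?_
    field_simp
    norm_num
    ring
  have h_curveZt : HasDerivAt (fun s : ℝ => 2 * y - (s + ε / s) * x)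
      (-(1 - ε / t ^ 2) * x) t := by
    have hinv : HasDerivAt (fun s : ℝ => ε / s) (ε * -(t ^ 2)⁻¹) t := by
      simpa [div_eq_mul_inv] using (hasDerivAt_inv ht').const_mul ε
    have h := (hasDerivAt_const t (2 * y)).fun_sub (((hasDerivAt_id t).fun_add hinv).mul_const x)
    refine h.congr_deriv ?_
    field_simp
    ring
  have h_Zy : HasDerivAt (fun s : ℝ => 2 * s - (t + ε / t) * x) 2 y := by
    have h := (((hasDerivAt_id y).const_mul 2)).sub_const ((t + ε / t) * x)
    refine h.congr_deriv ?_
    ring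
  -- the t-derivative
  have h_t := (h_rpow.fun_mul h_expT).fun_mul (aux_comp2 θ hθ h_curveS h_curveZt)
  -- the y-derivative
  have h_y := (aux_comp2 θ hθ (hasDerivAt_const y s0) h_Zy).const_mul
    (t ^ (-(1 : ℝ) / 2) * Real.exp (-x ^ 2 / (4 * t)))
  -- the x-derivative, as a function of x
  have h_expX : ∀ x' : ℝ, HasDerivAt (fun s : ℝ => Real.exp (-s ^ 2 / (4 * t)))
      (Real.exp (-x' ^ 2 / (4 * t)) * (-(x' / (2 * t)))) x' := by
    intro x'
    have h := (((hasDerivAt_pow 2 x').fun_neg).div_const (4 * t)).exp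
    refine h.congr_deriv ?_
    field_simp
    ring
  have h_Zx : ∀ x' : ℝ, HasDerivAt (fun s : ℝ => 2 * y - (t + ε / t) * s)
      (-(t + ε / t)) x' := by
    intro x'
    have h := (hasDerivAt_const x' (2 * y)).fun_sub ((hasDerivAt_id x').const_mul (t + ε / t))
    refine h.congr_deriv ?_
    ring
  have h_x : ∀ x' : ℝ, HasDerivAt
      (fun s : ℝ => P * Real.exp (-s ^ 2 / (4 * t)) * θ s0 (2 * y - (t + ε / t) * s))
      (P * Real.exp (-x' ^ 2 / (4 * t)) *
        (-(x' / (2 * t)) * θ s0 (2 * y - (t + ε / t) * x')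
          - (t + ε / t) * dZ θ s0 (2 * y - (t + ε / t) * x'))) x' := by
    intro x'
    have h := ((h_expX x').const_mul P).fun_mul
      (aux_comp2 θ hθ (hasDerivAt_const x' s0) (h_Zx x'))
    refine h.congr_deriv ?_
    ring
  -- second x-derivative of the explicit first-derivative formula
  have h_lin : HasDerivAt (fun s : ℝ => -(s / (2 * t))) (-(1 / (2 * t))) x := by
    have h := ((hasDerivAt_id x).div_const (2 * t)).fun_neg
    exact h
  have h_inner : HasDerivAt
      (fun s : ℝ => -(s / (2 * t)) * θ s0 (2 * y - (t + ε / t) * s)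
          - (t + ε / t) * dZ θ s0 (2 * y - (t + ε / t) * s))
      (-(1 / (2 * t)) * θ s0 z0
        + -(x / (2 * t)) * (dS θ s0 z0 * 0 + dZ θ s0 z0 * -(t + ε / t))
        - (t + ε / t) * (dS (dZ θ) s0 z0 * 0 + dZ (dZ θ) s0 z0 * -(t + ε / t))) x := by
    have h1 := h_lin.fun_mul (aux_comp2 θ hθ (hasDerivAt_const x s0) (h_Zx x))
    have h2 := (aux_comp2 (dZ θ) hG (hasDerivAt_const x s0) (h_Zx x)).const_mul (t + ε / t)
    have h := h1.fun_sub h2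
    exact h
  have h_xx := ((h_expX x).const_mul P).fun_mul h_inner
  -- rewrite the goal
  simp only [Dt, Dx, Dy]
  have hfun : (fun s : ℝ => deriv (fun s' : ℝ =>
        t ^ (-(1 : ℝ) / 2) * Real.exp (-s' ^ 2 / (4 * t)) *
          θ (t ^ 3 / 3 + 2 * ε * t - 1 / t) (2 * y - (t + ε / t) * s')) s)
      = fun s : ℝ => P * Real.exp (-s ^ 2 / (4 * t)) *
        (-(s / (2 * t)) * θ s0 (2 * y - (t + ε / t) * s)
          - (t + ε / t) * dZ θ s0 (2 * y - (t + ε / t) * s)) := by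
    funext x'
    exact (h_x x').deriv
  rw [hfun, h_t.deriv, h_y.deriv, h_xx.deriv]
  rw [hheat s0 z0]
  have hPt : t ^ (-(1 : ℝ) / 2 - 1) = P / t := by
    rw [hP, Real.rpow_sub ht, Real.rpow_one]
  rw [hPt]
  set A := θ s0 z0
  set B := dZ θ s0 z0
  set C := dZ (dZ θ) s0 z0
  set D := dS (dZ θ) s0 z0
  set E := Real.exp (-x ^ 2 / (4 * t))
  field_simp
  ring_nf
  rw [hε2]
  ring
end

section
/- Let θ : ℝ² → ℝ be a smooth solution of θ_s = θ_{zz}. Then u(t,x,y) := x · θ(y³/3, t − y/x) is a smooth solution of u_t + x u_y = x⁵ u_{xx} on the region x > 0. -/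
lemma keyD {F : ℝ → ℝ → ℝ} (hF : ContDiff ℝ (⊤ : ℕ∞) (fun p : ℝ × ℝ => F p.1 p.2))
    {s z : ℝ → ℝ} {s' z' t : ℝ} (hs : HasDerivAt s s' t) (hz : HasDerivAt z z' t) :
    HasDerivAt (fun a => F (s a) (z a))
      (dS F (s t) (z t) * s' + dZ F (s t) (z t) * z') t := by
  have hd : Differentiable ℝ (fun p : ℝ × ℝ => F p.1 p.2) := hF.differentiable (by simp)
  set L := fderiv ℝ (fun p : ℝ × ℝ => F p.1 p.2) (s t, z t) with hL
  have hF' : HasFDerivAt (fun p : ℝ × ℝ => F p.1 p.2) L (s t, z t) := (hd _).hasFDerivAt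
  have hg : HasDerivAt (fun a => (s a, z a)) (s', z') t := hs.prodMk hz
  have h := hF'.comp_hasDerivAt t hg
  have h1 : dS F (s t) (z t) = L ((1:ℝ), (0:ℝ)) := by
    have hc : HasDerivAt (fun a : ℝ => (a, z t)) ((1:ℝ), (0:ℝ)) (s t) :=
      (hasDerivAt_id (s t)).prodMk (hasDerivAt_const _ _)
    have h'' : HasDerivAt (fun a => F a (z t)) (L ((1:ℝ), (0:ℝ))) (s t) :=
      by have := hF'.comp_hasDerivAt (s t) hc; exact this
    simpa [dS] using h''.deriv
  have h2 : dZ F (s t) (z t) = L ((0:ℝ), (1:ℝ)) := by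
    have hc : HasDerivAt (fun a : ℝ => (s t, a)) ((0:ℝ), (1:ℝ)) (z t) :=
      (hasDerivAt_const _ _).prodMk (hasDerivAt_id (z t))
    have h'' : HasDerivAt (fun a => F (s t) a) (L ((0:ℝ), (1:ℝ))) (z t) :=
      hF'.comp_hasDerivAt (z t) hc
    simpa [dZ] using h''.deriv
  refine h.congr_deriv ?_
  rw [h1, h2]
  have he : (s', z') = s' • ((1:ℝ), (0:ℝ)) + z' • ((0:ℝ), (1:ℝ)) := by
    simp [Prod.ext_iff]
  rw [he, map_add, map_smul, map_smul, smul_eq_mul, smul_eq_mul]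
  ring

lemma smooth_dZ {F : ℝ → ℝ → ℝ} (hF : ContDiff ℝ (⊤ : ℕ∞) (fun p : ℝ × ℝ => F p.1 p.2)) :
    ContDiff ℝ (⊤ : ℕ∞) (fun p : ℝ × ℝ => dZ F p.1 p.2) := by
  have heq : (fun p : ℝ × ℝ => dZ F p.1 p.2)
      = fun p : ℝ × ℝ => fderiv ℝ (fun q : ℝ × ℝ => F q.1 q.2) p ((0:ℝ), (1:ℝ)) := by
    funext p
    have hd : Differentiable ℝ (fun p : ℝ × ℝ => F p.1 p.2) := hF.differentiable (by simp)
    have hF' : HasFDerivAt (fun q : ℝ × ℝ => F q.1 q.2)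
        (fderiv ℝ (fun q : ℝ × ℝ => F q.1 q.2) p) p := (hd p).hasFDerivAt
    have hc : HasDerivAt (fun a : ℝ => (p.1, a)) ((0:ℝ), (1:ℝ)) p.2 :=
      (hasDerivAt_const _ _).prodMk (hasDerivAt_id p.2)
    have h'' : HasDerivAt (fun a => F p.1 a)
        (fderiv ℝ (fun q : ℝ × ℝ => F q.1 q.2) p ((0:ℝ), (1:ℝ))) p.2 :=
      by have := hF'.comp_hasDerivAt p.2 hc; exact this
    simpa [dZ] using h''.deriv
  rw [heq]
  exact (hF.fderiv_right (by simp)).clm_apply contDiff_const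

theorem stmt8 (θ : ℝ → ℝ → ℝ)
    (hθ : ContDiff ℝ (⊤ : ℕ∞) (fun p : ℝ × ℝ => θ p.1 p.2))
    (hheat : ∀ s z : ℝ, dS θ s z = dZ (dZ θ) s z) :
    ∀ t x y : ℝ, 0 < x →
      Dt (fun t x y => x * θ (y ^ 3 / 3) (t - y / x)) t x y
        + x * Dy (fun t x y => x * θ (y ^ 3 / 3) (t - y / x)) t x y
        = x ^ 5 * Dx (Dx (fun t x y => x * θ (y ^ 3 / 3) (t - y / x))) t x y := by
  intro t x y hx
  have hx0 : x ≠ 0 := ne_of_gt hx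
  have hθz := smooth_dZ hθ
  -- Dt computation
  have hDt : Dt (fun t x y => x * θ (y ^ 3 / 3) (t - y / x)) t x y
      = x * (dS θ (y ^ 3 / 3) (t - y / x) * 0 + dZ θ (y ^ 3 / 3) (t - y / x) * 1) := by
    have h := (keyD hθ (hasDerivAt_const t ((y:ℝ) ^ 3 / 3))
      ((hasDerivAt_id t).sub_const (y / x))).const_mul x
    exact h.deriv
  -- Dy computation
  have hs3 : HasDerivAt (fun a : ℝ => a ^ 3 / 3) (y ^ 2) y := by
    have h : HasDerivAt (fun a : ℝ => a ^ 3 / 3) (↑3 * y ^ (3 - 1) / 3) y := (hasDerivAt_pow 3 y).div_const 3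
    convert h using 1
    push_cast; ring
  have hzy : HasDerivAt (fun a : ℝ => t - a / x) (-(1 / x)) y := by
    have h := ((hasDerivAt_id y).div_const x).const_sub t
    simpa [one_div] using h
  have hDy : Dy (fun t x y => x * θ (y ^ 3 / 3) (t - y / x)) t x y
      = x * (dS θ (y ^ 3 / 3) (t - y / x) * y ^ 2 + dZ θ (y ^ 3 / 3) (t - y / x) * (-(1 / x))) := by
    have h := (keyD hθ hs3 hzy).const_mul x
    exact h.deriv
  -- inner derivative in x'
  have hinv : ∀ x' : ℝ, x' ≠ 0 → HasDerivAt (fun s : ℝ => t - y / s) (y / x' ^ 2) x' := by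
    intro x' hx'
    have h0 : HasDerivAt (fun s : ℝ => y / s) (y * -(x' ^ 2)⁻¹) x' :=
      (hasDerivAt_inv hx').const_mul y |>.congr_deriv rfl |>.congr_of_eventuallyEq
        (by filter_upwards with s; rw [div_eq_mul_inv])
    have h1 := h0.const_sub t
    exact h1.congr_deriv (by ring)
  have hDx : ∀ x' : ℝ, x' ≠ 0 →
      Dx (fun t x y => x * θ (y ^ 3 / 3) (t - y / x)) t x' y
        = θ (y ^ 3 / 3) (t - y / x') + y / x' * dZ θ (y ^ 3 / 3) (t - y / x') := by
    intro x' hx'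
    have hin := keyD hθ (hasDerivAt_const x' ((y:ℝ) ^ 3 / 3)) (hinv x' hx')
    have h : HasDerivAt (fun s : ℝ => s * θ (y ^ 3 / 3) (t - y / s))
        (1 * θ (y ^ 3 / 3) (t - y / x')
          + x' * (dS θ (y ^ 3 / 3) (t - y / x') * 0
            + dZ θ (y ^ 3 / 3) (t - y / x') * (y / x' ^ 2))) x' :=
      (hasDerivAt_id x').mul hin
    rw [show Dx (fun t x y => x * θ (y ^ 3 / 3) (t - y / x)) t x' y
        = deriv (fun s => s * θ (y ^ 3 / 3) (t - y / s)) x' from rfl, h.deriv]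
    field_simp
    ring
  -- second derivative
  have hyx : HasDerivAt (fun s : ℝ => y / s) (-(y / x ^ 2)) x := by
    have h0 : HasDerivAt (fun s : ℝ => y * s⁻¹) (y * -(x ^ 2)⁻¹) x :=
      (hasDerivAt_inv hx0).const_mul y
    have h1 : HasDerivAt (fun s : ℝ => y / s) (y * -(x ^ 2)⁻¹) x := by
      refine h0.congr_of_eventuallyEq ?_
      filter_upwards with s; rw [div_eq_mul_inv]
    convert h1 using 1
    field_simp
  have hg : HasDerivAt
      (fun x' => θ (y ^ 3 / 3) (t - y / x') + y / x' * dZ θ (y ^ 3 / 3) (t - y / x'))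
      ((dS θ (y ^ 3 / 3) (t - y / x) * 0 + dZ θ (y ^ 3 / 3) (t - y / x) * (y / x ^ 2))
        + (-(y / x ^ 2) * dZ θ (y ^ 3 / 3) (t - y / x)
          + y / x * (dS (dZ θ) (y ^ 3 / 3) (t - y / x) * 0
            + dZ (dZ θ) (y ^ 3 / 3) (t - y / x) * (y / x ^ 2)))) x := by
    have h1 := keyD hθ (hasDerivAt_const x ((y:ℝ) ^ 3 / 3)) (hinv x hx0)
    have h2 := keyD hθz (hasDerivAt_const x ((y:ℝ) ^ 3 / 3)) (hinv x hx0)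
    exact h1.add (hyx.mul h2)
  have hEq : (fun x' => Dx (fun t x y => x * θ (y ^ 3 / 3) (t - y / x)) t x' y)
      =ᶠ[nhds x] (fun x' => θ (y ^ 3 / 3) (t - y / x')
        + y / x' * dZ θ (y ^ 3 / 3) (t - y / x')) := by
    filter_upwards [eventually_ne_nhds hx0] with x' hx'
    exact hDx x' hx'
  have hDxx : Dx (Dx (fun t x y => x * θ (y ^ 3 / 3) (t - y / x))) t x y
      = (dS θ (y ^ 3 / 3) (t - y / x) * 0 + dZ θ (y ^ 3 / 3) (t - y / x) * (y / x ^ 2))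
        + (-(y / x ^ 2) * dZ θ (y ^ 3 / 3) (t - y / x)
          + y / x * (dS (dZ θ) (y ^ 3 / 3) (t - y / x) * 0
            + dZ (dZ θ) (y ^ 3 / 3) (t - y / x) * (y / x ^ 2))) := by
    have : Dx (Dx (fun t x y => x * θ (y ^ 3 / 3) (t - y / x))) t x y
        = deriv (fun x' => θ (y ^ 3 / 3) (t - y / x')
            + y / x' * dZ θ (y ^ 3 / 3) (t - y / x')) x := hEq.deriv_eq
    rw [this, hg.deriv]
  rw [hDt, hDy, hDxx, hheat (y ^ 3 / 3) (t - y / x)]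
  field_simp
  ring
end

section
/- Let θ : ℝ² → ℝ be a smooth solution of the heat equation θ_s = θ_{zz}. Then u(t,x,y) := x · θ(t, 1/x) is a smooth solution of u_t + x u_y = x⁴ u_{xx} on the region x > 0. -/
theorem stmt9 (θ : ℝ → ℝ → ℝ)
    (hθ : ContDiff ℝ (⊤ : ℕ∞) (fun p : ℝ × ℝ => θ p.1 p.2))
    (hheat : ∀ s z : ℝ, dS θ s z = dZ (dZ θ) s z) :
    ∀ t x y : ℝ, 0 < x →
      Dt (fun t x _y => x * θ t (1 / x)) t x y
        + x * Dy (fun t x _y => x * θ t (1 / x)) t x y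
        = x ^ 4 * Dx (Dx (fun t x _y => x * θ t (1 / x))) t x y := by
  intro t x y hx0
  set G : ℝ × ℝ → ℝ := fun p => θ p.1 p.2 with hGdef
  set Gz : ℝ × ℝ → ℝ := fun p => fderiv ℝ G p (0, 1) with hGzdef
  set Gs : ℝ × ℝ → ℝ := fun p => fderiv ℝ G p (1, 0) with hGsdef
  have hGz_smooth : ContDiff ℝ (⊤ : ℕ∞) Gz := by
    have h1 : ContDiff ℝ (⊤ : ℕ∞) (fun p : ℝ × ℝ => fderiv ℝ G p) :=
      hθ.fderiv_right (le_refl _)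
    exact h1.clm_apply contDiff_const
  -- partial derivative in z
  have hz : ∀ s z : ℝ, HasDerivAt (fun z => θ s z) (Gz (s, z)) z := by
    intro s z
    have hF : HasFDerivAt G (fderiv ℝ G (s, z)) (s, z) :=
      (hθ.differentiable (by simp) (s, z)).hasFDerivAt
    have hline : HasDerivAt (fun z : ℝ => ((s, z) : ℝ × ℝ)) (0, 1) z :=
      (hasDerivAt_const z s).prodMk (hasDerivAt_id z)
    exact hF.comp_hasDerivAt z hline
  -- partial derivative in s
  have hs : ∀ s z : ℝ, HasDerivAt (fun a => θ a z) (Gs (s, z)) s := by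
    intro s z
    have hF : HasFDerivAt G (fderiv ℝ G (s, z)) (s, z) :=
      (hθ.differentiable (by simp) (s, z)).hasFDerivAt
    have hline : HasDerivAt (fun a : ℝ => ((a, z) : ℝ × ℝ)) (1, 0) s :=
      (hasDerivAt_id s).prodMk (hasDerivAt_const s z)
    exact hF.comp_hasDerivAt s hline
  -- second partial derivative in z
  have hzz : ∀ s z : ℝ, HasDerivAt (fun z => Gz (s, z)) (fderiv ℝ Gz (s, z) (0, 1)) z := by
    intro s z
    have hF : HasFDerivAt Gz (fderiv ℝ Gz (s, z)) (s, z) :=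
      (hGz_smooth.differentiable (by simp) (s, z)).hasFDerivAt
    have hline : HasDerivAt (fun z : ℝ => ((s, z) : ℝ × ℝ)) (0, 1) z :=
      (hasDerivAt_const z s).prodMk (hasDerivAt_id z)
    exact hF.comp_hasDerivAt z hline
  set Gzz : ℝ × ℝ → ℝ := fun p => fderiv ℝ Gz p (0, 1) with hGzzdef
  have hxne : x ≠ 0 := ne_of_gt hx0
  -- heat equation in terms of Gs, Gzz
  have hheat' : Gs (t, x⁻¹) = Gzz (t, x⁻¹) := by
    have h1 : dS θ t x⁻¹ = Gs (t, x⁻¹) := (hs t x⁻¹).deriv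
    have h2 : dZ θ t = fun z => Gz (t, z) := funext fun z => (hz t z).deriv
    have h3 : dZ (dZ θ) t x⁻¹ = Gzz (t, x⁻¹) := by
      show deriv ((dZ θ) t) x⁻¹ = _
      rw [h2]
      exact (hzz t x⁻¹).deriv
    rw [← h1, hheat t x⁻¹, h3]
  -- first derivative in x, valid for any s ≠ 0
  have hfderiv : ∀ s : ℝ, s ≠ 0 →
      HasDerivAt (fun r : ℝ => r * θ t (1 / r))
        (θ t s⁻¹ + s * (Gz (t, s⁻¹) * (-(s ^ 2)⁻¹))) s := by
    intro s hs0
    have h1 : HasDerivAt (fun r : ℝ => r⁻¹) (-(s ^ 2)⁻¹) s := hasDerivAt_inv hs0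
    have h2 : HasDerivAt (fun r : ℝ => θ t r⁻¹) (Gz (t, s⁻¹) * (-(s ^ 2)⁻¹)) s :=
      (hz t s⁻¹).comp s h1
    have h3 := (hasDerivAt_id s).fun_mul h2
    simp only [one_mul, id_eq] at h3
    simpa only [one_div] using h3
  -- Dx value on a neighborhood of x
  have hDx_eq : ∀ s : ℝ, 0 < s →
      Dx (fun t x _y => x * θ t (1 / x)) t s y
        = θ t s⁻¹ - s⁻¹ * Gz (t, s⁻¹) := by
    intro s hs0
    have := (hfderiv s (ne_of_gt hs0)).deriv
    show deriv (fun r : ℝ => r * θ t (1 / r)) s = _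
    rw [this]
    field_simp
    ring
  -- second derivative
  have a1 : HasDerivAt (fun r : ℝ => θ t r⁻¹) (Gz (t, x⁻¹) * (-(x ^ 2)⁻¹)) x :=
    (hz t x⁻¹).comp x (hasDerivAt_inv hxne)
  have a2 : HasDerivAt (fun r : ℝ => Gz (t, r⁻¹)) (Gzz (t, x⁻¹) * (-(x ^ 2)⁻¹)) x :=
    (hzz t x⁻¹).comp x (hasDerivAt_inv hxne)
  have a3 : HasDerivAt (fun r : ℝ => r⁻¹ * Gz (t, r⁻¹))
      ((-(x ^ 2)⁻¹) * Gz (t, x⁻¹) + x⁻¹ * (Gzz (t, x⁻¹) * (-(x ^ 2)⁻¹))) x :=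
    (hasDerivAt_inv hxne).mul a2
  have a4 : HasDerivAt (fun r : ℝ => θ t r⁻¹ - r⁻¹ * Gz (t, r⁻¹))
      (Gz (t, x⁻¹) * (-(x ^ 2)⁻¹)
        - ((-(x ^ 2)⁻¹) * Gz (t, x⁻¹) + x⁻¹ * (Gzz (t, x⁻¹) * (-(x ^ 2)⁻¹)))) x :=
    a1.sub a3
  have hEq : (fun s : ℝ => Dx (fun t x _y => x * θ t (1 / x)) t s y)
      =ᶠ[nhds x] (fun s : ℝ => θ t s⁻¹ - s⁻¹ * Gz (t, s⁻¹)) := by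
    filter_upwards [eventually_gt_nhds hx0] with s hs0
    exact hDx_eq s hs0
  have hDxDx : Dx (Dx (fun t x _y => x * θ t (1 / x))) t x y
      = Gz (t, x⁻¹) * (-(x ^ 2)⁻¹)
        - ((-(x ^ 2)⁻¹) * Gz (t, x⁻¹) + x⁻¹ * (Gzz (t, x⁻¹) * (-(x ^ 2)⁻¹))) := by
    show deriv (fun s : ℝ => Dx (fun t x _y => x * θ t (1 / x)) t s y) x = _
    rw [hEq.deriv_eq]
    exact a4.deriv
  have hDt : Dt (fun t x _y => x * θ t (1 / x)) t x y = x * Gs (t, x⁻¹) := by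
    show deriv (fun s : ℝ => x * θ s (1 / x)) t = _
    have : HasDerivAt (fun s : ℝ => x * θ s (1 / x)) (x * Gs (t, x⁻¹)) t := by
      have := (hs t (1 / x)).const_mul x
      simpa only [one_div] using this
    exact this.deriv
  have hDy : Dy (fun t x _y => x * θ t (1 / x)) t x y = 0 := by
    show deriv (fun _ : ℝ => x * θ t (1 / x)) y = 0
    exact deriv_const y _
  rw [hDt, hDy, hDxDx, hheat']
  field_simp
  ring
end

section
/- Let θ : ℝ × (0,∞) → ℝ be a smooth solution of θ_s = θ_{zz} − (3/4)z^{−2}θ. Then v(t,x) := x^{1/4}·e^{x + t/2}·θ(e^{2t}/4, √(2x)·e^{t}) satisfies ∂_t v = x·∂_x² v − x·v for all t ∈ ℝ and x > 0. Consequently, u(t,x,y) := e^{y}·v(t,x) is a solution of u_t + x u_y = x·u_{xx} on x > 0. -/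
private lemma lin_apply (L : ℝ × ℝ →L[ℝ] ℝ) (a b : ℝ) :
    L (a, b) = a * L (1, 0) + b * L (0, 1) := by
  have h : ((a, b) : ℝ × ℝ) = a • ((1:ℝ), (0:ℝ)) + b • ((0:ℝ), (1:ℝ)) := by
    simp [Prod.ext_iff]
  rw [h, map_add, map_smul, map_smul, smul_eq_mul, smul_eq_mul]

private lemma part1 (θ : ℝ → ℝ → ℝ)
    (hθ : ContDiffOn ℝ (⊤ : ℕ∞) (fun p : ℝ × ℝ => θ p.1 p.2) {p : ℝ × ℝ | 0 < p.2})
    (hheat : ∀ s z : ℝ, 0 < z →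
      dS θ s z = dZ (dZ θ) s z - (3 / 4) / z ^ 2 * θ s z)
    (t x : ℝ) (hx : 0 < x) :
    dS (fun t x => x ^ ((1 : ℝ) / 4) * Real.exp (x + t / 2) *
          θ (Real.exp (2 * t) / 4) (Real.sqrt (2 * x) * Real.exp t)) t x
      = x * dZ (dZ (fun t x => x ^ ((1 : ℝ) / 4) * Real.exp (x + t / 2) *
          θ (Real.exp (2 * t) / 4) (Real.sqrt (2 * x) * Real.exp t))) t x
        - x * (x ^ ((1 : ℝ) / 4) * Real.exp (x + t / 2) *
          θ (Real.exp (2 * t) / 4) (Real.sqrt (2 * x) * Real.exp t)) := by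
  set F : ℝ × ℝ → ℝ := fun p => θ p.1 p.2 with hF
  set U : Set (ℝ × ℝ) := {p : ℝ × ℝ | 0 < p.2} with hU
  have hUo : IsOpen U := isOpen_lt continuous_const continuous_snd
  have hFd : ∀ p ∈ U, HasFDerivAt F (fderiv ℝ F p) p := fun p hp =>
    ((hθ.contDiffAt (hUo.mem_nhds hp)).differentiableAt (by simp)).hasFDerivAt
  set θz : ℝ × ℝ → ℝ := fun p => fderiv ℝ F p (0, 1) with hθzdef
  have hθzC : ContDiffOn ℝ (⊤ : ℕ∞) θz U := by
    have h1 : ContDiffOn ℝ (⊤ : ℕ∞) (fderiv ℝ F) U := hθ.fderiv_of_isOpen hUo (by simp)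
    exact (ContinuousLinearMap.apply ℝ ℝ ((0:ℝ), (1:ℝ))).contDiff.comp_contDiffOn h1
  have hθzd : ∀ p ∈ U, HasFDerivAt θz (fderiv ℝ θz p) p := fun p hp =>
    ((hθzC.contDiffAt (hUo.mem_nhds hp)).differentiableAt (by simp)).hasFDerivAt
  -- partial derivatives relations
  have hdZθ : ∀ s z : ℝ, 0 < z → dZ θ s z = θz (s, z) := by
    intro s z hz
    have hc : HasDerivAt (fun a : ℝ => ((s, a) : ℝ × ℝ)) ((0:ℝ), (1:ℝ)) z :=
      (hasDerivAt_const z s).prodMk (hasDerivAt_id z)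
    exact ((hFd (s, z) hz).comp_hasDerivAt z hc).deriv
  have hdSθ : ∀ s z : ℝ, 0 < z → dS θ s z = fderiv ℝ F (s, z) (1, 0) := by
    intro s z hz
    have hc : HasDerivAt (fun a : ℝ => ((a, z) : ℝ × ℝ)) ((1:ℝ), (0:ℝ)) s :=
      (hasDerivAt_id s).prodMk (hasDerivAt_const s z)
    exact ((hFd (s, z) hz).comp_hasDerivAt s hc).deriv
  have hdZZθ : ∀ s z : ℝ, 0 < z → dZ (dZ θ) s z = fderiv ℝ θz (s, z) (0, 1) := by
    intro s z hz
    have hev : (fun a => dZ θ s a) =ᶠ[nhds z] fun a => θz (s, a) := by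
      filter_upwards [eventually_gt_nhds hz] with a ha using hdZθ s a ha
    have hc : HasDerivAt (fun a : ℝ => ((s, a) : ℝ × ℝ)) ((0:ℝ), (1:ℝ)) z :=
      (hasDerivAt_const z s).prodMk (hasDerivAt_id z)
    have h2 := ((hθzd (s, z) hz).comp_hasDerivAt z hc).deriv
    calc dZ (dZ θ) s z = deriv (fun a => θz (s, a)) z := hev.deriv_eq
    _ = fderiv ℝ θz (s, z) (0, 1) := h2
  have heat' : ∀ s z : ℝ, 0 < z →
      fderiv ℝ F (s, z) (1, 0) = fderiv ℝ θz (s, z) (0, 1) - (3 / 4) / z ^ 2 * θ s z := by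
    intro s z hz
    rw [← hdSθ s z hz, ← hdZZθ s z hz]; exact hheat s z hz
  -- notation
  set c : ℝ := Real.exp t with hcdef
  set s0 : ℝ := Real.exp (2 * t) / 4 with hs0def
  set z : ℝ → ℝ := fun b => Real.sqrt (2 * b) * c with hzdef
  have hzpos : ∀ b : ℝ, 0 < b → 0 < z b := fun b hb => by
    have h1 : 0 < Real.sqrt (2 * b) := Real.sqrt_pos.mpr (by linarith)
    exact mul_pos h1 (Real.exp_pos t)
  have hz' : ∀ b : ℝ, 0 < b → HasDerivAt z (z b / (2 * b)) b := by
    intro b hb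
    have h2b : (0:ℝ) < 2 * b := by linarith
    have hs : Real.sqrt (2 * b) ≠ 0 := ne_of_gt (Real.sqrt_pos.mpr h2b)
    have hm : Real.sqrt (2 * b) * Real.sqrt (2 * b) = 2 * b := Real.mul_self_sqrt h2b.le
    have h1 : HasDerivAt (fun a : ℝ => 2 * a) 2 b := by
      simpa using (hasDerivAt_id b).const_mul (2:ℝ)
    have h2 := (Real.hasDerivAt_sqrt (ne_of_gt h2b)).comp b h1
    have h3 := h2.mul_const c
    refine h3.congr_deriv ?_
    symm
    show Real.sqrt (2 * b) * c / (2 * b) = 1 / (2 * Real.sqrt (2 * b)) * 2 * c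
    have hsp : (0:ℝ) < Real.sqrt (2*b) := Real.sqrt_pos.mpr h2b
    rw [div_mul_eq_mul_div, div_mul_eq_mul_div, div_eq_div_iff h2b.ne' (by positivity)]
    linear_combination 2 * c * hm
  set A : ℝ → ℝ := fun b => b ^ ((1:ℝ)/4) * Real.exp (b + t / 2) with hAdef
  have hA' : ∀ b : ℝ, 0 < b → HasDerivAt A ((1 / (4 * b) + 1) * A b) b := by
    intro b hb
    have hr : HasDerivAt (fun a : ℝ => a ^ ((1:ℝ)/4)) ((1/4) * b ^ ((1:ℝ)/4 - 1)) b :=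
      Real.hasDerivAt_rpow_const (Or.inl (ne_of_gt hb))
    have he : HasDerivAt (fun a : ℝ => Real.exp (a + t / 2)) (Real.exp (b + t / 2)) b := by
      simpa using ((hasDerivAt_id b).add_const (t / 2)).exp
    have h := hr.mul he
    refine h.congr_deriv ?_
    symm
    have hrs : b ^ ((1:ℝ)/4 - 1) = b ^ ((1:ℝ)/4) / b := by
      rw [Real.rpow_sub hb, Real.rpow_one]
    rw [hrs]
    show (1 / (4 * b) + 1) * (b ^ ((1:ℝ)/4) * Real.exp (b + t / 2)) = _
    field_simp
  -- derivative of θ-compositions in x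
  have hΘ' : ∀ b : ℝ, 0 < b →
      HasDerivAt (fun a => θ s0 (z a)) (z b / (2 * b) * θz (s0, z b)) b := by
    intro b hb
    have hsm : ((0:ℝ), z b / (2 * b)) = (z b / (2 * b)) • ((0:ℝ), (1:ℝ)) := by simp
    have hc : HasDerivAt (fun a : ℝ => ((s0, z a) : ℝ × ℝ)) ((0:ℝ), z b / (2 * b)) b :=
      (hasDerivAt_const b s0).prodMk (hz' b hb)
    have h := (hFd (s0, z b) (hzpos b hb)).comp_hasDerivAt b hc
    rw [hsm, ContinuousLinearMap.map_smul, smul_eq_mul] at h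
    exact h
  have hΘz' : ∀ b : ℝ, 0 < b →
      HasDerivAt (fun a => θz (s0, z a)) (z b / (2 * b) * fderiv ℝ θz (s0, z b) (0, 1)) b := by
    intro b hb
    have hsm : ((0:ℝ), z b / (2 * b)) = (z b / (2 * b)) • ((0:ℝ), (1:ℝ)) := by simp
    have hc : HasDerivAt (fun a : ℝ => ((s0, z a) : ℝ × ℝ)) ((0:ℝ), z b / (2 * b)) b :=
      (hasDerivAt_const b s0).prodMk (hz' b hb)
    have h := (hθzd (s0, z b) (hzpos b hb)).comp_hasDerivAt b hc
    rw [hsm, ContinuousLinearMap.map_smul, smul_eq_mul] at h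
    exact h
  -- first x-derivative of v
  have hdZv : ∀ b : ℝ, 0 < b →
      dZ (fun t x => x ^ ((1 : ℝ) / 4) * Real.exp (x + t / 2) *
          θ (Real.exp (2 * t) / 4) (Real.sqrt (2 * x) * Real.exp t)) t b
        = (1 / (4 * b) + 1) * A b * θ s0 (z b) + A b * (z b / (2 * b) * θz (s0, z b)) :=
    fun b hb => ((hA' b hb).mul (hΘ' b hb)).deriv
  -- second x-derivative
  have hq : HasDerivAt (fun b : ℝ => 1 / (4 * b) + 1) (-4 / (4 * x) ^ 2) x := by
    have h4 : HasDerivAt (fun b : ℝ => 4 * b) 4 x := by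
      simpa using (hasDerivAt_id x).const_mul (4:ℝ)
    have h := (h4.inv (by positivity)).add_const (1:ℝ)
    simp only [one_div]
    exact h
  have hAx := hA' x hx
  have hΘx := hΘ' x hx
  have hΘzx := hΘz' x hx
  have hzdiv : HasDerivAt (fun b : ℝ => z b / (2 * b))
      ((z x / (2 * x) * (2 * x) - z x * 2) / (2 * x) ^ 2) x := by
    have h2 : HasDerivAt (fun b : ℝ => 2 * b) 2 x := by
      simpa using (hasDerivAt_id x).const_mul (2:ℝ)
    exact (hz' x hx).div h2 (by positivity)
  have hW := ((hq.mul hAx).mul hΘx).add (hAx.mul (hzdiv.mul hΘzx))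
  have e2 : deriv (fun b => (1 / (4 * b) + 1) * A b * θ s0 (z b)
        + A b * (z b / (2 * b) * θz (s0, z b))) x
      = ((-4 / (4 * x) ^ 2 * A x + (1 / (4 * x) + 1) * ((1 / (4 * x) + 1) * A x)) * θ s0 (z x)
          + (1 / (4 * x) + 1) * A x * (z x / (2 * x) * θz (s0, z x)))
        + ((1 / (4 * x) + 1) * A x * (z x / (2 * x) * θz (s0, z x))
          + A x * ((z x / (2 * x) * (2 * x) - z x * 2) / (2 * x) ^ 2 * θz (s0, z x)
            + z x / (2 * x) * (z x / (2 * x) * fderiv ℝ θz (s0, z x) (0, 1)))) :=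
    hW.deriv
  have e1 : dZ (dZ (fun t x => x ^ ((1 : ℝ) / 4) * Real.exp (x + t / 2) *
        θ (Real.exp (2 * t) / 4) (Real.sqrt (2 * x) * Real.exp t))) t x
      = deriv (fun b => (1 / (4 * b) + 1) * A b * θ s0 (z b)
          + A b * (z b / (2 * b) * θz (s0, z b))) x := by
    have hev : (fun b => dZ (fun t x => x ^ ((1 : ℝ) / 4) * Real.exp (x + t / 2) *
          θ (Real.exp (2 * t) / 4) (Real.sqrt (2 * x) * Real.exp t)) t b)
        =ᶠ[nhds x] (fun b => (1 / (4 * b) + 1) * A b * θ s0 (z b)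
          + A b * (z b / (2 * b) * θz (s0, z b))) := by
      filter_upwards [eventually_gt_nhds hx] with b hb using hdZv b hb
    exact hev.deriv_eq
  -- t-derivative
  have hAt : HasDerivAt (fun a : ℝ => x ^ ((1:ℝ)/4) * Real.exp (x + a / 2))
      (x ^ ((1:ℝ)/4) * (Real.exp (x + t / 2) * (1 / 2))) t := by
    have h1 : HasDerivAt (fun a : ℝ => x + a / 2) (1 / 2) t := by
      simpa using ((hasDerivAt_id t).div_const 2).const_add x
    exact (h1.exp).const_mul _
  have hcurve : HasDerivAt
      (fun a : ℝ => ((Real.exp (2 * a) / 4, Real.sqrt (2 * x) * Real.exp a) : ℝ × ℝ))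
      ((Real.exp (2 * t) * 2 / 4, Real.sqrt (2 * x) * Real.exp t)) t := by
    have h1 : HasDerivAt (fun a : ℝ => Real.exp (2 * a) / 4) (Real.exp (2 * t) * 2 / 4) t := by
      have h2 : HasDerivAt (fun a : ℝ => 2 * a) 2 t := by
        simpa using (hasDerivAt_id t).const_mul (2:ℝ)
      exact h2.exp.div_const 4
    have h2 : HasDerivAt (fun a : ℝ => Real.sqrt (2 * x) * Real.exp a)
        (Real.sqrt (2 * x) * Real.exp t) t := (Real.hasDerivAt_exp t).const_mul _
    exact h1.prodMk h2
  have hΘt : HasDerivAt (fun a => θ (Real.exp (2 * a) / 4) (Real.sqrt (2 * x) * Real.exp a))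
      (fderiv ℝ F (s0, z x) ((Real.exp (2 * t) * 2 / 4, Real.sqrt (2 * x) * Real.exp t))) t :=
    by have := (hFd (s0, z x) (hzpos x hx)).comp_hasDerivAt t hcurve; exact this
  have e0 : dS (fun t x => x ^ ((1 : ℝ) / 4) * Real.exp (x + t / 2) *
        θ (Real.exp (2 * t) / 4) (Real.sqrt (2 * x) * Real.exp t)) t x
      = x ^ ((1:ℝ)/4) * (Real.exp (x + t / 2) * (1 / 2)) * θ s0 (z x)
        + x ^ ((1:ℝ)/4) * Real.exp (x + t / 2) *
          fderiv ℝ F (s0, z x) ((Real.exp (2 * t) * 2 / 4, Real.sqrt (2 * x) * Real.exp t)) :=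
    (hAt.mul hΘt).deriv
  -- assemble
  rw [e0, e1, e2,
    lin_apply (fderiv ℝ F (s0, z x)) (Real.exp (2 * t) * 2 / 4) (Real.sqrt (2 * x) * Real.exp t),
    show (fderiv ℝ F (s0, z x)) ((0:ℝ), (1:ℝ)) = θz (s0, z x) from rfl,
    heat' s0 (z x) (hzpos x hx)]
  simp only [hAdef, hzdef, hcdef]
  rw [show Real.exp (2 * t) = Real.exp t * Real.exp t from by rw [two_mul, Real.exp_add]]
  have hrne : Real.sqrt (2 * x) ≠ 0 := ne_of_gt (Real.sqrt_pos.mpr (by linarith))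
  have hr2 : Real.sqrt (2 * x) * Real.sqrt (2 * x) = 2 * x := Real.mul_self_sqrt (by linarith)
  set r : ℝ := Real.sqrt (2 * x) with hrdef
  set T : ℝ := θ s0 (r * Real.exp t) with hT
  set P : ℝ := θz (s0, r * Real.exp t) with hP
  set Ψ : ℝ := fderiv ℝ θz (s0, r * Real.exp t) ((0:ℝ), (1:ℝ)) with hΨ
  set R : ℝ := x ^ ((1:ℝ)/4) with hR
  set E : ℝ := Real.exp (x + t / 2) with hE
  set ec : ℝ := Real.exp t with hec
  have hx2 : x = r * r / 2 := by linarith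
  rw [hx2]
  have hecne : ec ≠ 0 := Real.exp_ne_zero t
  have hrne' : r ≠ 0 := hrne
  field_simp
  ring
theorem stmt12 (θ : ℝ → ℝ → ℝ)
    (hθ : ContDiffOn ℝ (⊤ : ℕ∞) (fun p : ℝ × ℝ => θ p.1 p.2) {p : ℝ × ℝ | 0 < p.2})
    (hheat : ∀ s z : ℝ, 0 < z →
      dS θ s z = dZ (dZ θ) s z - (3 / 4) / z ^ 2 * θ s z) :
    (∀ t x : ℝ, 0 < x →
      dS (fun t x => x ^ ((1 : ℝ) / 4) * Real.exp (x + t / 2) *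
            θ (Real.exp (2 * t) / 4) (Real.sqrt (2 * x) * Real.exp t)) t x
        = x * dZ (dZ (fun t x => x ^ ((1 : ℝ) / 4) * Real.exp (x + t / 2) *
            θ (Real.exp (2 * t) / 4) (Real.sqrt (2 * x) * Real.exp t))) t x
          - x * (x ^ ((1 : ℝ) / 4) * Real.exp (x + t / 2) *
            θ (Real.exp (2 * t) / 4) (Real.sqrt (2 * x) * Real.exp t))) ∧
    (∀ t x y : ℝ, 0 < x →
      Dt (fun t x y => Real.exp y * (x ^ ((1 : ℝ) / 4) * Real.exp (x + t / 2) *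
            θ (Real.exp (2 * t) / 4) (Real.sqrt (2 * x) * Real.exp t))) t x y
        + x * Dy (fun t x y => Real.exp y * (x ^ ((1 : ℝ) / 4) * Real.exp (x + t / 2) *
            θ (Real.exp (2 * t) / 4) (Real.sqrt (2 * x) * Real.exp t))) t x y
        = x * Dx (Dx (fun t x y => Real.exp y * (x ^ ((1 : ℝ) / 4) * Real.exp (x + t / 2) *
            θ (Real.exp (2 * t) / 4) (Real.sqrt (2 * x) * Real.exp t)))) t x y) := by
  constructor
  · exact fun t x hx => part1 θ hθ hheat t x hx
  · intro t x y hx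
    set v : ℝ → ℝ → ℝ := fun t x => x ^ ((1 : ℝ) / 4) * Real.exp (x + t / 2) *
            θ (Real.exp (2 * t) / 4) (Real.sqrt (2 * x) * Real.exp t) with hv
    have h1 : Dt (fun t x y => Real.exp y * v t x) t x y = Real.exp y * dS v t x := by
      rw [Dt, dS]; exact deriv_const_mul_field _
    have h2 : Dy (fun t x y => Real.exp y * v t x) t x y = Real.exp y * v t x := by
      rw [Dy]
      exact ((Real.hasDerivAt_exp y).mul_const (v t x)).deriv
    have h3 : ∀ t' x' y', Dx (fun t x y => Real.exp y * v t x) t' x' y'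
        = Real.exp y' * dZ v t' x' := by
      intro t' x' y'
      rw [Dx, dZ]; exact deriv_const_mul_field _
    have h4 : Dx (Dx (fun t x y => Real.exp y * v t x)) t x y
        = Real.exp y * dZ (dZ v) t x := by
      rw [Dx]
      have h5 : (fun s => Dx (fun t x y => Real.exp y * v t x) t s y)
          = fun s => Real.exp y * dZ v t s := funext fun s => h3 t s y
      rw [h5, dZ]
      exact deriv_const_mul_field _
    rw [h1, h2, h4, part1 θ hθ hheat t x hx]
    ring
end

section
/- For m ∈ ℕ, m ≥ 1, define on smooth functions of x > 0 the operators R_l := ∂_x − l/x for l = 1, …, m, and let P_{2m−1}(t,x) = Σ_{j=0}^{m−1} (t^j/j!)·x^{2m−1−2j}/(2m−1−2j)! be the heat polynomial of degree 2m−1. Then R_m ∘ R_{m−1} ∘ ⋯ ∘ R_1 applied to P_{2m−1} (as a function of x, for each fixed t) is identically zero on x > 0. -/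
/-- The operator `R_l = ∂_x - l/x` on functions of one real variable. -/
noncomputable def opR (l : ℕ) (f : ℝ → ℝ) : ℝ → ℝ :=
  fun x => deriv f x - (l : ℝ) / x * f x

/-- The composition `R_m ∘ R_{m-1} ∘ ⋯ ∘ R_1` (with `R_1` applied first). -/
noncomputable def opRcomp : ℕ → (ℝ → ℝ) → (ℝ → ℝ)
  | 0, f => f
  | l + 1, f => opR (l + 1) (opRcomp l f)

/-!
On `x > 0` the operator `R_l` maps `x ^ n` to `(n - l) x ^ (n - 1)`, so `R_k ∘ ⋯ ∘ R_1` maps it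
to `∏_{i < k} (n - 2i - 1) · x ^ (n - k)`. For an odd degree `n = 2p + 1` with `p < k` the factor
`i = p` vanishes. Every term of the heat polynomial `P_{2m-1}` is such an odd monomial of degree
`< 2m`, whatever the value of `t`.
-/

open Finset Set

lemma opR_congr_of_eqOn {f g : ℝ → ℝ} (hfg : EqOn f g (Ioi 0)) (l : ℕ) :
    EqOn (opR l f) (opR l g) (Ioi 0) := by
  intro x hx
  have hnhds : f =ᶠ[nhds x] g := Filter.eventuallyEq_of_mem (Ioi_mem_nhds hx) hfg
  simp only [opR, hnhds.deriv_eq, hfg hx]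

lemma opR_sum_zpow {ι : Type*} (l : ℕ) (s : Finset ι) (c : ι → ℝ) (n : ι → ℤ) :
    EqOn (opR l fun x => ∑ i ∈ s, c i * x ^ n i)
      (fun x => ∑ i ∈ s, c i * (n i - l) * x ^ (n i - 1)) (Ioi 0) := by
  intro x (hx : 0 < x)
  have hderiv : HasDerivAt (fun x => ∑ i ∈ s, c i * x ^ n i)
      (∑ i ∈ s, c i * (n i * x ^ (n i - 1))) x :=
    HasDerivAt.fun_sum fun i _ => (hasDerivAt_zpow (n i) x (Or.inl hx.ne')).const_mul (c i)
  rw [opR, hderiv.deriv, mul_sum, ← sum_sub_distrib]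
  refine sum_congr rfl fun i _ => ?_
  rw [zpow_sub_one₀ hx.ne']
  field_simp

lemma opRcomp_sum_zpow {ι : Type*} (k : ℕ) (s : Finset ι) (c : ι → ℝ) (n : ι → ℤ) :
    EqOn (opRcomp k fun x => ∑ i ∈ s, c i * x ^ n i)
      (fun x => ∑ i ∈ s, c i * (∏ j ∈ range k, ((n i : ℝ) - 2 * j - 1)) * x ^ (n i - k))
      (Ioi 0) := by
  induction k with
  | zero => intro x _; simp [opRcomp]
  | succ k ih =>
    intro x hx
    rw [opRcomp, opR_congr_of_eqOn ih (k + 1) hx, opR_sum_zpow (k + 1) s _ _ hx]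
    refine sum_congr rfl fun i _ => ?_
    rw [prod_range_succ, show n i - k - 1 = n i - ↑(k + 1) by push_cast; ring]
    push_cast
    ring

lemma opRcomp_sum_odd_pow_eq_zero {ι : Type*} {k : ℕ} {s : Finset ι} (c : ι → ℝ) {p : ι → ℕ}
    (hp : ∀ i ∈ s, p i < k) :
    EqOn (opRcomp k fun x => ∑ i ∈ s, c i * x ^ (2 * p i + 1)) 0 (Ioi 0) := by
  intro x hx
  have hzpow : (fun x : ℝ => ∑ i ∈ s, c i * x ^ (2 * p i + 1))
      = fun x => ∑ i ∈ s, c i * x ^ ((2 * p i + 1 : ℕ) : ℤ) := by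
    simp only [zpow_natCast]
  rw [hzpow, opRcomp_sum_zpow k s c _ hx, Pi.zero_apply]
  refine sum_eq_zero fun i hi => ?_
  have hfactor : ∏ j ∈ range k, (((2 * p i + 1 : ℕ) : ℤ) - 2 * (j : ℝ) - 1) = 0 :=
    prod_eq_zero (mem_range.mpr (hp i hi)) (by push_cast; ring)
  rw [hfactor, mul_zero, zero_mul]

theorem stmt17_general (m : ℕ) (t : ℝ) :
    ∀ x : ℝ, 0 < x →
      opRcomp m (fun x => ∑ j ∈ Finset.range m,
        t ^ j / (Nat.factorial j : ℝ) *
          x ^ (2 * (m - j) - 1) / (Nat.factorial (2 * (m - j) - 1) : ℝ)) x = 0 := by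
  have hP : (fun x : ℝ => ∑ j ∈ range m,
      t ^ j / (Nat.factorial j : ℝ) * x ^ (2 * (m - j) - 1) / (Nat.factorial (2 * (m - j) - 1) : ℝ))
      = fun x => ∑ j ∈ range m,
        t ^ j / (Nat.factorial j * Nat.factorial (2 * (m - j) - 1) : ℝ) * x ^ (2 * (m - 1 - j) + 1) := by
    funext x
    refine sum_congr rfl fun j hj => ?_
    rw [show 2 * (m - j) - 1 = 2 * (m - 1 - j) + 1 by have := mem_range.mp hj; omega]
    ring
  rw [hP]
  exact opRcomp_sum_odd_pow_eq_zero _ fun j hj => by have := mem_range.mp hj; omega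

theorem stmt17 (m : ℕ) (hm : 1 ≤ m) (t : ℝ) :
    ∀ x : ℝ, 0 < x →
      opRcomp m (fun x => ∑ j ∈ Finset.range m,
        t ^ j / (Nat.factorial j : ℝ) *
          x ^ (2 * (m - j) - 1) / (Nat.factorial (2 * (m - j) - 1) : ℝ)) x = 0 :=
  stmt17_general m t
end
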